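/- arXiv:2504.09729 — 10 statements merged into one kernel-verified Lean document; each statement's English description precedes it below -/
import Mathlib

section
/- If W is a continuous distance monoid with coinit(W) = ω, then for every n ∈ ℕ there is an initial sequence α : ω → W⁺ such that n·α(k+1) ≤ α(k) for all k ∈ ω. -/
/-- A complete distance monoid: a commutative positively linearly ordered monoid whose
order is a complete linear order with least element `0`, and in which addition
distributes over infima. -/
class CompleteDistMonoid (W : Type*) extends AddCommMonoid W, CompleteLinearOrder W where
  bot_eq_zero : (⊥ : W) = 0
  add_le_add_left : ∀ a b : W, a ≤ b → ∀ c : W, c + a ≤ c + b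
  add_le_add_right : ∀ a b : W, a ≤ b → ∀ c : W, a + c ≤ b + c
  add_sInf : ∀ (A : Set W) (b : W), b + sInf A = ⨅ a ∈ A, (a + b)

/-- `W` is continuous at `0` if `0 = inf {a + b | a, b ∈ W⁺}` (where `W⁺ = W \ {0}`). -/
def ContinuousAtZero (W : Type*) [CompleteDistMonoid W] : Prop :=
  sInf {c : W | ∃ a b : W, a ≠ 0 ∧ b ≠ 0 ∧ c = a + b} = 0

/-- An initial sequence in `W` with domain the ordinal `δ`: an order-reversing map into
`W⁺ = W \ {0}` that is coinitial in `W⁺`. -/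
def IsInitialSeq {W : Type*} [Zero W] [Preorder W] (δ : Ordinal) (s : Ordinal → W) : Prop :=
  (∀ i, i < δ → s i ≠ 0) ∧
  (∀ i j : Ordinal, i ≤ j → j < δ → s j ≤ s i) ∧
  ∀ a : W, a ≠ 0 → ∃ β, β < δ ∧ s β ≤ a

/-- The coinitiality of `W`: the least ordinal that is the domain of an initial sequence. -/
noncomputable def coinit (W : Type*) [Zero W] [Preorder W] : Ordinal :=
  sInf {δ : Ordinal | ∃ s : Ordinal → W, IsInitialSeq δ s}

/-!
Continuity at `0` says every `a ∈ W⁺` has a nonzero `b` with `b + b ≤ a`; halving `m` times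
with `n ≤ 2 ^ m` yields a nonzero `b` with `n • b ≤ a`. Given an initial sequence `t` of
length `ω`, set `α 0 = t 0` and let `α (k + 1)` be the minimum of `t (k + 1)` and such an
`n`-th part of `α k`: then `α ≤ t` keeps `α` coinitial.
-/

structure IsNatInitialSeq {W : Type*} [Zero W] [Preorder W] (α : ℕ → W) : Prop where
  ne_zero : ∀ k, α k ≠ 0
  antitone : Antitone α
  exists_le : ∀ a : W, a ≠ 0 → ∃ k, α k ≤ a

theorem IsInitialSeq.isNatInitialSeq {W : Type*} [Zero W] [Preorder W] {s : Ordinal → W}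
    (hs : IsInitialSeq Ordinal.omega0 s) : IsNatInitialSeq (fun k : ℕ => s k) := by
  obtain ⟨hs0, hsanti, hscoinit⟩ := hs
  refine ⟨fun k => hs0 _ (Ordinal.natCast_lt_omega0 k),
    fun i j hij => hsanti _ _ (by exact_mod_cast hij) (Ordinal.natCast_lt_omega0 j), ?_⟩
  intro a ha
  obtain ⟨β, hβ, hle⟩ := hscoinit a ha
  obtain ⟨k, rfl⟩ := Ordinal.lt_omega0.1 hβ
  exact ⟨k, hle⟩

universe u v

-- The universe of the ordinals in `coinit` is independent of `W`; it is named to state `hne`.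
theorem exists_isInitialSeq_coinit {W : Type u} [Zero W] [Preorder W] (h : coinit.{u, v} W ≠ 0) :
    ∃ s : Ordinal.{v} → W, IsInitialSeq (coinit W) s := by
  have hne : {δ : Ordinal.{v} | ∃ s : Ordinal → W, IsInitialSeq δ s}.Nonempty :=
    Set.nonempty_iff_ne_empty.2 fun hempty => h (by rw [coinit, hempty, Ordinal.sInf_empty])
  exact csInf_mem hne

theorem exists_isNatInitialSeq_of_coinit_eq_omega0 {W : Type*} [Zero W] [Preorder W]
    (h : coinit W = Ordinal.omega0) : ∃ t : ℕ → W, IsNatInitialSeq t := by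
  obtain ⟨s, hs⟩ := exists_isInitialSeq_coinit (h ▸ Ordinal.omega0_ne_zero : coinit W ≠ 0)
  exact ⟨_, (h ▸ hs).isNatInitialSeq⟩

theorem IsNatInitialSeq.exists_nsmul_succ_le {W : Type*} [AddCommMonoid W] [LinearOrder W]
    [IsOrderedAddMonoid W] {t : ℕ → W} (ht : IsNatInitialSeq t) {n : ℕ}
    (hdiv : ∀ a : W, a ≠ 0 → ∃ b : W, b ≠ 0 ∧ b ≤ a ∧ n • b ≤ a) :
    ∃ α : ℕ → W, IsNatInitialSeq α ∧ ∀ k, n • α (k + 1) ≤ α k := by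
  choose part hpart0 hpart_le hpart_nsmul using hdiv
  let next (k : ℕ) (p : {x : W // x ≠ 0}) : {x : W // x ≠ 0} :=
    ⟨min (t (k + 1)) (part p p.2), min_rec' (· ≠ 0) (ht.ne_zero _) (hpart0 p p.2)⟩
  let α (k : ℕ) : {x : W // x ≠ 0} := Nat.rec ⟨t 0, ht.ne_zero 0⟩ next k
  have hα_part (k : ℕ) : (α (k + 1)).1 ≤ part (α k).1 (α k).2 := min_le_right _ _
  have hα_le_t (k : ℕ) : (α k).1 ≤ t k := by
    cases k with
    | zero => exact le_rfl
    | succ k => exact min_le_left _ _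
  refine ⟨fun k => (α k).1, ⟨fun k => (α k).2, ?_, ?_⟩, ?_⟩
  · exact antitone_nat_of_succ_le fun k => (hα_part k).trans (hpart_le _ _)
  · intro a ha
    obtain ⟨k, hk⟩ := ht.exists_le a ha
    exact ⟨k, (hα_le_t k).trans hk⟩
  · exact fun k => (nsmul_le_nsmul_right (hα_part k) n).trans (hpart_nsmul _ _)

namespace CompleteDistMonoid

variable {W : Type*} [CompleteDistMonoid W]

instance toIsOrderedAddMonoid : IsOrderedAddMonoid W where
  add_le_add_left a b h c := add_le_add_right a b h c

theorem zero_le (a : W) : 0 ≤ a := bot_eq_zero (W := W) ▸ bot_le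

theorem exists_add_self_le (hW : ContinuousAtZero W) {a : W} (ha : a ≠ 0) :
    ∃ b : W, b ≠ 0 ∧ b + b ≤ a := by
  obtain ⟨c, ⟨x, y, hx, hy, rfl⟩, hxy⟩ := sInf_lt_iff.1 (hW ▸ (zero_le a).lt_of_ne' ha)
  refine ⟨min x y, min_rec' (· ≠ 0) hx hy, ?_⟩
  exact (add_le_add (min_le_left x y) (min_le_right x y)).trans hxy.le

theorem exists_two_pow_nsmul_le (hW : ContinuousAtZero W) {a : W} (ha : a ≠ 0) (m : ℕ) :
    ∃ b : W, b ≠ 0 ∧ 2 ^ m • b ≤ a := by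
  induction m with
  | zero => exact ⟨a, ha, by simp⟩
  | succ m ih =>
    obtain ⟨b, hb, hba⟩ := ih
    obtain ⟨c, hc, hcb⟩ := exists_add_self_le hW hb
    refine ⟨c, hc, ?_⟩
    calc 2 ^ (m + 1) • c = 2 ^ m • (c + c) := by rw [pow_succ, mul_nsmul', two_nsmul]
      _ ≤ 2 ^ m • b := nsmul_le_nsmul_right hcb _
      _ ≤ a := hba

theorem exists_le_and_nsmul_le (hW : ContinuousAtZero W) {a : W} (ha : a ≠ 0) (n : ℕ) :
    ∃ b : W, b ≠ 0 ∧ b ≤ a ∧ n • b ≤ a := by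
  obtain ⟨b, hb, hba⟩ := exists_two_pow_nsmul_le hW ha n
  have hle {k : ℕ} (hk : k ≤ 2 ^ n) : k • b ≤ a := (nsmul_le_nsmul_left (zero_le b) hk).trans hba
  exact ⟨b, hb, one_nsmul b ▸ hle Nat.one_le_two_pow, hle Nat.lt_two_pow_self.le⟩

end CompleteDistMonoid

/-- If `coinit W = ω`, then for every `n` there is an initial sequence `α : ω → W⁺` with
`n • α (k+1) ≤ α k` for all `k`. -/
theorem stmt1 (W : Type*) [CompleteDistMonoid W] (hW : ContinuousAtZero W)
    (hco : coinit W = Ordinal.omega0) (n : ℕ) :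
    ∃ α : ℕ → W,
      (∀ k : ℕ, α k ≠ 0) ∧
      (∀ i j : ℕ, i ≤ j → α j ≤ α i) ∧
      (∀ a : W, a ≠ 0 → ∃ k : ℕ, α k ≤ a) ∧
      ∀ k : ℕ, n • α (k + 1) ≤ α k := by
  obtain ⟨t, ht⟩ := exists_isNatInitialSeq_of_coinit_eq_omega0 hco
  obtain ⟨α, hα, hstep⟩ :=
    ht.exists_nsmul_succ_le fun _ ha => CompleteDistMonoid.exists_le_and_nsmul_le hW ha n
  exact ⟨α, hα.ne_zero, hα.antitone, hα.exists_le, hstep⟩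
end

section
/- Let W be a distance monoid and let (W*, ≤*) be a complete linear order containing (W, ≤) as a suborder, with least element 0, such that every element of W* is the infimum of the set of elements of W above it and the supremum of the set of elements of W below it. Define a +* b = inf{a' + b' : a', b' ∈ W, a' ≥ a, b' ≥ b} for a, b ∈ W*. Then (W*, +*, 0, ≤*) is a distance monoid whose operation restricted to W × W agrees with +, and +* is the unique such operation: if +° is any operation making (W*, +°, 0, ≤*) a distance monoid with +° restricted to W × W equal to +, then +° = +*. -/
/-- A distance monoid: a commutative positively linearly ordered monoid in which
addition distributes over existing infima. -/
class DistMonoid (W : Type*) extends AddCommMonoid W, LinearOrder W where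
  zero_le : ∀ a : W, 0 ≤ a
  add_le_add_left : ∀ a b : W, a ≤ b → ∀ c : W, c + a ≤ c + b
  add_le_add_right : ∀ a b : W, a ≤ b → ∀ c : W, a + c ≤ b + c
  glb_add : ∀ (A : Set W) (x b : W), IsGLB A x → IsGLB ((fun a => a + b) '' A) (x + b)

/-- The distance-monoid axioms for a binary operation on a complete linear order, with
identity (and least element) `⊥ = 0`. -/
def IsDistMonoidOp {W' : Type*} [CompleteLinearOrder W'] (add : W' → W' → W') : Prop :=
  (∀ a b c : W', add (add a b) c = add a (add b c)) ∧
  (∀ a b : W', add a b = add b a) ∧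
  (∀ a : W', add ⊥ a = a) ∧
  (∀ a b : W', a ≤ b → ∀ c : W', add c a ≤ add c b) ∧
  (∀ a b : W', a ≤ b → ∀ c : W', add a c ≤ add b c) ∧
  ∀ (A : Set W') (b : W'), add b (sInf A) = ⨅ a ∈ A, add a b

/-- The canonical extension of `+` to the completion:
`a +* b = inf {a' + b' | a' , b' ∈ W, a ≤ a', b ≤ b'}`. -/
noncomputable def addStar {W W' : Type*} [DistMonoid W] [CompleteLinearOrder W']
    (e : W ↪o W') (x y : W') : W' :=
  sInf {z : W' | ∃ a b : W, x ≤ e a ∧ y ≤ e b ∧ z = e (a + b)}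

section DMAux

variable {W W' : Type*} [DistMonoid W] [CompleteLinearOrder W'] (e : W ↪o W')

lemma dm_add_le_add {a a' b b' : W} (ha : a ≤ a') (hb : b ≤ b') : a + b ≤ a' + b' :=
  le_trans (DistMonoid.add_le_add_right a a' ha b) (DistMonoid.add_le_add_left b b' hb a')

lemma dm_addStar_le {x y : W'} {a b : W} (ha : x ≤ e a) (hb : y ≤ e b) :
    addStar e x y ≤ e (a + b) :=
  sInf_le ⟨a, b, ha, hb, rfl⟩

lemma dm_le_addStar {x y z : W'} (h : ∀ a b : W, x ≤ e a → y ≤ e b → z ≤ e (a + b)) :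
    z ≤ addStar e x y := by
  apply le_sInf
  rintro w ⟨a, b, ha, hb, rfl⟩
  exact h a b ha hb

lemma dm_addStar_comm (x y : W') : addStar e x y = addStar e y x := by
  unfold addStar
  congr 1
  ext w
  constructor
  · rintro ⟨a, b, ha, hb, rfl⟩; exact ⟨b, a, hb, ha, by rw [add_comm]⟩
  · rintro ⟨a, b, ha, hb, rfl⟩; exact ⟨b, a, hb, ha, by rw [add_comm]⟩

lemma dm_addStar_mono_left {x x' : W'} (h : x ≤ x') (y : W') :
    addStar e x y ≤ addStar e x' y := by
  apply sInf_le_sInf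
  rintro w ⟨a, b, ha, hb, rfl⟩
  exact ⟨a, b, le_trans h ha, hb, rfl⟩

lemma dm_addStar_ext (a b : W) : addStar e (e a) (e b) = e (a + b) := by
  refine le_antisymm (dm_addStar_le e le_rfl le_rfl) (dm_le_addStar e ?_)
  intro a' b' ha hb
  exact e.monotone (dm_add_le_add (e.le_iff_le.mp ha) (e.le_iff_le.mp hb))

variable (hdense : ∀ x : W',
      IsGLB (Set.range e ∩ Set.Ici x) x ∧ IsLUB (Set.range e ∩ Set.Iic x) x)

include hdense

lemma dm_key {S : Set W} {g : W} (hg : IsGLB S g) {z : W'} (hz : ∀ s ∈ S, z ≤ e s) :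
    z ≤ e g := by
  by_contra h
  push_neg at h
  obtain ⟨w', hw'mem, hw'⟩ : ∃ w' ∈ Set.range e ∩ Set.Iic z, ¬ w' ≤ e g := by
    by_contra hc
    push_neg at hc
    exact absurd ((hdense z).2.2 hc) (not_le.mpr h)
  obtain ⟨⟨w, rfl⟩, hwz⟩ := hw'mem
  have hgw : g < w := e.lt_iff_lt.mp (not_le.mp hw')
  have hlb : w ∈ lowerBounds S := fun s hs => e.le_iff_le.mp (le_trans hwz (hz s hs))
  exact absurd (hg.2 hlb) (not_le.mpr hgw)

lemma dm_lemA {Z : Set W'} {u : W} (h1 : sInf Z ≤ e u) (h2 : ∀ w ∈ Z, e u < w) :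
    IsGLB {d : W | ∃ w ∈ Z, w ≤ e d} u := by
  constructor
  · rintro d ⟨w, hw, hwd⟩
    exact e.le_iff_le.mp (le_trans (h2 w hw).le hwd)
  · intro u₀ hu₀
    by_contra hc
    push_neg at hc
    obtain ⟨w, hwZ, hw⟩ : ∃ w ∈ Z, w < e u₀ := by
      by_contra hc2
      push_neg at hc2
      exact absurd (le_trans (le_sInf hc2) h1) (not_le.mpr (e.lt_iff_lt.mpr hc))
    obtain ⟨d', hd'mem, hd'⟩ : ∃ d' ∈ Set.range e ∩ Set.Ici w, ¬ e u₀ ≤ d' := by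
      by_contra hc2
      push_neg at hc2
      exact absurd ((hdense w).1.2 hc2) (not_le.mpr hw)
    obtain ⟨⟨d, rfl⟩, hwd⟩ := hd'mem
    exact absurd (hu₀ ⟨w, hwZ, hwd⟩) (not_le.mpr (e.lt_iff_lt.mp (not_le.mp hd')))

lemma dm_addStar_bot (he0 : e 0 = ⊥) (x : W') : addStar e ⊥ x = x := by
  refine le_antisymm ?_ (dm_le_addStar e ?_)
  · refine (hdense x).1.2 ?_
    rintro w ⟨⟨b, rfl⟩, hxb⟩
    have : addStar e ⊥ x ≤ e (0 + b) := dm_addStar_le e (le_of_eq he0.symm) hxb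
    rwa [zero_add] at this
  · intro a b _ hb
    refine le_trans hb (e.monotone ?_)
    calc b = 0 + b := (zero_add b).symm
    _ ≤ a + b := DistMonoid.add_le_add_right 0 a (DistMonoid.zero_le a) b

lemma dm_addStar_distrib (A : Set W') (b : W') :
    addStar e b (sInf A) = ⨅ a ∈ A, addStar e a b := by
  refine le_antisymm (le_iInf₂ fun a ha => ?_) ?_
  · rw [dm_addStar_comm]
    exact dm_addStar_mono_left e (sInf_le ha) b
  · refine le_sInf ?_
    rintro w ⟨c, d, hbc, hAd, rfl⟩
    by_cases hcase : ∃ a ∈ A, a ≤ e d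
    · obtain ⟨a, haA, had⟩ := hcase
      refine le_trans (iInf₂_le a haA) ?_
      rw [add_comm c d]
      exact dm_addStar_le e had hbc
    · push_neg at hcase
      have hglb := dm_lemA e hdense hAd hcase
      have hglb2 := DistMonoid.glb_add _ d c hglb
      rw [add_comm c d]
      refine dm_key e hdense hglb2 ?_
      rintro s ⟨d', ⟨a, haA, had'⟩, rfl⟩
      exact le_trans (iInf₂_le a haA) (dm_addStar_le e had' hbc)

lemma dm_addStar_assoc_aux (x y z : W') :
    addStar e (addStar e x y) z =
      sInf {w : W' | ∃ a b c : W, x ≤ e a ∧ y ≤ e b ∧ z ≤ e c ∧ w = e (a + b + c)} := by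
  refine le_antisymm (le_sInf ?_) (le_sInf ?_)
  · rintro w ⟨a, b, c, ha, hb, hc, rfl⟩
    exact sInf_le ⟨a + b, c, dm_addStar_le e ha hb, hc, rfl⟩
  · rintro w ⟨u, c, hu, hc, rfl⟩
    by_cases hcase : ∃ v ∈ {v : W' | ∃ a b : W, x ≤ e a ∧ y ≤ e b ∧ v = e (a + b)}, v ≤ e u
    · obtain ⟨v, ⟨a, b, ha, hb, rfl⟩, hv⟩ := hcase
      have h1 : a + b + c ≤ u + c :=
        DistMonoid.add_le_add_right _ _ (e.le_iff_le.mp hv) c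
      exact le_trans (sInf_le ⟨a, b, c, ha, hb, hc, rfl⟩) (e.monotone h1)
    · push_neg at hcase
      have hu' : sInf {v : W' | ∃ a b : W, x ≤ e a ∧ y ≤ e b ∧ v = e (a + b)} ≤ e u := hu
      have hglb := dm_lemA e hdense hu' hcase
      have hglb2 := DistMonoid.glb_add _ u c hglb
      refine dm_key e hdense hglb2 ?_
      rintro s ⟨d', ⟨v, ⟨a, b, ha, hb, rfl⟩, hvd⟩, rfl⟩
      have h1 : a + b + c ≤ d' + c :=
        DistMonoid.add_le_add_right _ _ (e.le_iff_le.mp hvd) c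
      exact le_trans (sInf_le ⟨a, b, c, ha, hb, hc, rfl⟩) (e.monotone h1)

lemma dm_addStar_assoc (x y z : W') :
    addStar e (addStar e x y) z = addStar e x (addStar e y z) := by
  rw [dm_addStar_comm e x (addStar e y z), dm_addStar_assoc_aux e hdense,
    dm_addStar_assoc_aux e hdense]
  congr 1
  ext w
  constructor
  · rintro ⟨a, b, c, ha, hb, hc, rfl⟩
    exact ⟨b, c, a, hb, hc, ha, by rw [show b + c + a = a + b + c by abel]⟩
  · rintro ⟨b, c, a, hb, hc, ha, rfl⟩
    exact ⟨a, b, c, ha, hb, hc, by rw [show a + b + c = b + c + a by abel]⟩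

lemma dm_uniq_aux (add' : W' → W' → W') (h : IsDistMonoidOp add') (x y : W') :
    add' x y = ⨅ w ∈ Set.range e ∩ Set.Ici x, ⨅ w' ∈ Set.range e ∩ Set.Ici y, add' w w' := by
  obtain ⟨-, hcomm, -, -, -, hdist⟩ := h
  have hx : sInf (Set.range e ∩ Set.Ici x) = x := (hdense x).1.sInf_eq
  have hy : sInf (Set.range e ∩ Set.Ici y) = y := (hdense y).1.sInf_eq
  have hstep : ∀ w : W', add' w y = ⨅ w' ∈ Set.range e ∩ Set.Ici y, add' w w' := by
    intro w
    calc add' w y = add' w (sInf (Set.range e ∩ Set.Ici y)) := (congrArg (add' w) hy).symm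
    _ = ⨅ w' ∈ Set.range e ∩ Set.Ici y, add' w' w := hdist _ w
    _ = ⨅ w' ∈ Set.range e ∩ Set.Ici y, add' w w' :=
        iInf_congr fun w' => iInf_congr fun _ => hcomm w' w
  calc add' x y = add' y x := hcomm x y
  _ = add' y (sInf (Set.range e ∩ Set.Ici x)) := (congrArg (add' y) hx).symm
  _ = ⨅ w ∈ Set.range e ∩ Set.Ici x, add' w y := hdist _ y
  _ = ⨅ w ∈ Set.range e ∩ Set.Ici x, ⨅ w' ∈ Set.range e ∩ Set.Ici y, add' w w' :=
      iInf_congr fun w => iInf_congr fun _ => hstep w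

end DMAux

/-- If `W'` is a complete linear order containing the distance monoid `W` as a suborder,
with least element `0 = e 0`, in which every element is the infimum of the elements of
`W` above it and the supremum of the elements of `W` below it, then `addStar` makes `W'`
a distance monoid extending `+`, and it is the unique such operation. -/
theorem stmt3 {W W' : Type*} [DistMonoid W] [CompleteLinearOrder W']
    (e : W ↪o W') (he0 : e 0 = ⊥)
    (hdense : ∀ x : W',
      IsGLB (Set.range e ∩ Set.Ici x) x ∧ IsLUB (Set.range e ∩ Set.Iic x) x) :
    (IsDistMonoidOp (addStar e) ∧ ∀ a b : W, addStar e (e a) (e b) = e (a + b)) ∧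
    ∀ add' : W' → W' → W', IsDistMonoidOp add' →
      (∀ a b : W, add' (e a) (e b) = e (a + b)) → add' = addStar e := by
  have hop : IsDistMonoidOp (addStar e) := by
    refine ⟨dm_addStar_assoc e hdense, dm_addStar_comm e, dm_addStar_bot e hdense he0, ?_, ?_,
      dm_addStar_distrib e hdense⟩
    · intro a b hab c
      rw [dm_addStar_comm e c a, dm_addStar_comm e c b]
      exact dm_addStar_mono_left e hab c
    · intro a b hab c
      exact dm_addStar_mono_left e hab c
  refine ⟨⟨hop, dm_addStar_ext e⟩, ?_⟩
  intro add' h' hext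
  funext x y
  rw [dm_uniq_aux e hdense add' h' x y, dm_uniq_aux e hdense (addStar e) hop x y]
  refine iInf_congr fun w => iInf_congr fun hw => iInf_congr fun w' => iInf_congr fun hw' => ?_
  obtain ⟨⟨a, rfl⟩, -⟩ := hw
  obtain ⟨⟨b, rfl⟩, -⟩ := hw'
  rw [hext, dm_addStar_ext]
end

section
/- Let W be a distance monoid and let W* be a completion of W, i.e., a complete distance monoid containing W as a substructure such that every element of W* is the infimum of the set of elements of W above it and the supremum of the set of elements of W below it. Then coinit(W) = coinit(W*), and if W is continuous at 0 then W* is continuous at 0. -/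
/-- `W` is continuous at `0` (general, possibly incomplete, distance monoid). -/
def ContinuousAtZeroGLB (W : Type*) [DistMonoid W] : Prop :=
  IsGLB {c : W | ∃ a b : W, a ≠ 0 ∧ b ≠ 0 ∧ c = a + b} 0

/-- From any family coinitial in `W⁺` indexed by `δ` one can extract a genuine
(order-reversing) initial sequence whose domain is an ordinal `≤ δ`. -/
lemma key_initial {W : Type*} [Zero W] [LinearOrder W] (δ : Ordinal) (c : Ordinal → W)
    (hc : ∀ a : W, a ≠ 0 → ∃ m, m < δ ∧ c m ≤ a ∧ c m ≠ 0) :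
    ∃ δ' ≤ δ, ∃ s : Ordinal → W, IsInitialSeq δ' s := by
  classical
  let k : Ordinal → Ordinal := Ordinal.lt_wf.fix
    (fun i rec => sInf {m | m < δ ∧ c m ≠ 0 ∧ ∀ j, ∀ h : j < i, c m < c (rec j h)})
  let A : Ordinal → Set Ordinal :=
    fun i => {m | m < δ ∧ c m ≠ 0 ∧ ∀ j, j < i → c m < c (k j)}
  have hk : ∀ i, k i = sInf (A i) := by
    intro i
    show Ordinal.lt_wf.fix _ i = _
    rw [WellFounded.fix_eq]
  have hmem : ∀ i, (A i).Nonempty → k i ∈ A i := by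
    intro i hi
    rw [hk]; exact csInf_mem hi
  have hanti : ∀ i j : Ordinal, i ≤ j → A j ⊆ A i := by
    intro i j hij m hm
    exact ⟨hm.1, hm.2.1, fun l hl => hm.2.2 l (lt_of_lt_of_le hl hij)⟩
  have hmono : ∀ i j : Ordinal, j < i → (A i).Nonempty → k j < k i := by
    intro i j hji hi
    have hki := hmem i hi
    have h1 : k j ≤ k i := by
      rw [hk j]
      exact csInf_le (OrderBot.bddBelow _) (hanti j i hji.le hki)
    rcases lt_or_eq_of_le h1 with h | h
    · exact h
    · exact absurd (h ▸ hki.2.2 j hji) (lt_irrefl _)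
  have hle : ∀ i, (A i).Nonempty → i ≤ k i := by
    intro i
    induction i using Ordinal.induction with
    | h i IH =>
      intro hi
      by_contra h
      push_neg at h
      have h1 : (A (k i)).Nonempty := hi.mono (hanti _ _ h.le)
      have h2 := IH (k i) h h1
      exact absurd (hmono i (k i) h hi) (not_lt.2 h2)
  have hexempty : {i : Ordinal | ¬ (A i).Nonempty}.Nonempty := by
    by_contra h
    rw [Set.not_nonempty_iff_eq_empty] at h
    have h' : ∀ i, (A i).Nonempty := by
      intro i
      by_contra hi
      exact absurd (h ▸ hi : i ∈ (∅ : Set Ordinal)) (Set.notMem_empty i)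
    exact absurd ((hmem δ (h' δ)).1) (not_lt.2 (hle δ (h' δ)))
  set δ' := sInf {i : Ordinal | ¬ (A i).Nonempty} with hδ'
  have hδ'empty : ¬ (A δ').Nonempty := csInf_mem hexempty
  have hδ'lt : ∀ j, j < δ' → (A j).Nonempty := by
    intro j hj
    by_contra h
    have : δ' ≤ j := csInf_le (OrderBot.bddBelow _)
      (show j ∈ {i : Ordinal | ¬ (A i).Nonempty} from h)
    exact absurd this (not_le.2 hj)
  have hδ'le : δ' ≤ δ := by
    by_contra h
    push_neg at h
    have h1 := hδ'lt δ h
    exact absurd ((hmem δ h1).1) (not_lt.2 (hle δ h1))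
  refine ⟨δ', hδ'le, fun i => c (k i), ?_, ?_, ?_⟩
  · intro i hi
    exact (hmem i (hδ'lt i hi)).2.1
  · intro i j hij hj
    rcases eq_or_lt_of_le hij with rfl | h
    · exact le_rfl
    · exact ((hmem j (hδ'lt j hj)).2.2 i h).le
  · intro a ha
    by_contra h
    push_neg at h
    obtain ⟨m, hm1, hm2, hm3⟩ := hc a ha
    exact hδ'empty ⟨m, hm1, hm3, fun j hj => lt_of_le_of_lt hm2 (h j hj)⟩

/-- If `X` is a completion of the distance monoid `W` (a complete distance monoid
containing `W` as a substructure, in which every element is the infimum of the elements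
of `W` above it and the supremum of the elements of `W` below it), then
`coinit W = coinit X`, and continuity at `0` passes from `W` to `X`. -/
theorem stmt4 {W X : Type*} [DistMonoid W] [CompleteDistMonoid X]
    (e : W ↪o X) (he0 : e 0 = 0) (headd : ∀ a b : W, e (a + b) = e a + e b)
    (hdense : ∀ x : X,
      IsGLB (Set.range e ∩ Set.Ici x) x ∧ IsLUB (Set.range e ∩ Set.Iic x) x) :
    coinit W = coinit X ∧ (ContinuousAtZeroGLB W → ContinuousAtZero X) := by
  classical
  have hzero_le_X : ∀ x : X, (0 : X) ≤ x := by
    intro x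
    rw [← CompleteDistMonoid.bot_eq_zero]
    exact bot_le
  have hne : ∀ w : W, w ≠ 0 → e w ≠ 0 := by
    intro w hw h
    exact hw (e.injective (h.trans he0.symm))
  -- every nonzero element of X has a nonzero element of (the image of) W below it
  have hbelow : ∀ x : X, x ≠ 0 → ∃ w : W, w ≠ 0 ∧ e w ≤ x := by
    intro x hx
    by_contra h
    push_neg at h
    apply hx
    have hub : x ≤ 0 := by
      refine (hdense x).2.2 ?_
      rintro y ⟨⟨w, rfl⟩, hy⟩
      rcases eq_or_ne w 0 with rfl | hw
      · rw [he0]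
      · exact absurd hy (by simpa using h w hw)
    exact le_antisymm hub (hzero_le_X x)
  -- direction 1 : initial sequences transfer from W to X
  have dir1 : ∀ δ : Ordinal, (∃ s : Ordinal → W, IsInitialSeq δ s) →
      ∃ t : Ordinal → X, IsInitialSeq δ t := by
    rintro δ ⟨s, hs1, hs2, hs3⟩
    refine ⟨fun i => e (s i), fun i hi => hne _ (hs1 i hi), fun i j hij hj => e.monotone (hs2 i j hij hj), ?_⟩
    intro x hx
    obtain ⟨w, hw, hwx⟩ := hbelow x hx
    obtain ⟨β, hβ, hβ'⟩ := hs3 w hw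
    exact ⟨β, hβ, (e.monotone hβ').trans hwx⟩
  -- direction 2 : from an initial sequence in X, one in W of no greater length
  have dir2 : ∀ δ : Ordinal, (∃ t : Ordinal → X, IsInitialSeq δ t) →
      ∃ δ' ≤ δ, ∃ s : Ordinal → W, IsInitialSeq δ' s := by
    rintro δ ⟨t, ht1, ht2, ht3⟩
    let c : Ordinal → W := fun i =>
      if h : t i ≠ 0 then (hbelow (t i) h).choose else 0
    apply key_initial δ c
    intro a ha
    obtain ⟨m, hm, hm'⟩ := ht3 (e a) (hne a ha)
    have htm : t m ≠ 0 := ht1 m hm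
    have hch := (hbelow (t m) htm).choose_spec
    have hc : c m = (hbelow (t m) htm).choose := dif_pos htm
    refine ⟨m, hm, ?_, by rw [hc]; exact hch.1⟩
    rw [hc]
    rw [← e.le_iff_le]
    exact hch.2.trans hm'
  constructor
  · -- coinit W = coinit X
    unfold coinit
    rcases Set.eq_empty_or_nonempty
        {δ : Ordinal | ∃ t : Ordinal → X, IsInitialSeq δ t} with hXe | hXne
    · have hWe : {δ : Ordinal | ∃ s : Ordinal → W, IsInitialSeq δ s} = ∅ := by
        rw [Set.eq_empty_iff_forall_notMem]
        intro δ hδ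
        exact absurd (dir1 δ hδ) (by
          rw [Set.eq_empty_iff_forall_notMem] at hXe
          exact hXe δ)
      rw [hWe, hXe]
    · have hX := csInf_mem hXne
      obtain ⟨δ', hδ'le, hδ'⟩ := dir2 _ hX
      have hWne : {δ : Ordinal | ∃ s : Ordinal → W, IsInitialSeq δ s}.Nonempty := ⟨δ', hδ'⟩
      have hW := csInf_mem hWne
      apply le_antisymm
      · exact le_trans (csInf_le (OrderBot.bddBelow _) hδ') hδ'le
      · exact csInf_le (OrderBot.bddBelow _) (dir1 _ hW)
  · -- continuity at 0 transfers
    intro hcont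
    set S : Set X := {c : X | ∃ a b : X, a ≠ 0 ∧ b ≠ 0 ∧ c = a + b} with hS
    show sInf S = 0
    refine le_antisymm ?_ (le_sInf fun x _ => hzero_le_X x)
    by_contra h
    have hne0 : sInf S ≠ 0 := fun h0 => h (le_of_eq h0)
    obtain ⟨w, hw, hwle⟩ := hbelow _ hne0
    -- w is a lower bound of the sums of nonzero elements of W
    have hlb : w ∈ lowerBounds {c : W | ∃ a b : W, a ≠ 0 ∧ b ≠ 0 ∧ c = a + b} := by
      rintro c ⟨a, b, ha, hb, rfl⟩
      rw [← e.le_iff_le]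
      refine hwle.trans ?_
      refine le_trans (sInf_le ?_) (le_of_eq (headd a b).symm)
      exact ⟨e a, e b, hne a ha, hne b hb, rfl⟩
    have hw0 : w ≤ 0 := hcont.2 hlb
    exact hw (le_antisymm hw0 (DistMonoid.zero_le w))
end

section
/- Let W be a continuous distance monoid, M a W-metric space, and p, q, r Cauchy sequences on M. Then d_C(p, r) ≤ d_C(p, q) + d_C(q, r). -/
/-- `d` is a `W`-metric on `M`. -/
def IsWMetric {W M : Type*} [CompleteDistMonoid W] (d : M → M → W) : Prop :=
  (∀ x y : M, max (d x y) (d y x) = 0 ↔ x = y) ∧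
  ∀ x y z : M, d x z ≤ d x y + d y z

/-- `p : A → M` is a Cauchy sequence on `(M, d)`: `A ⊆ W⁺`, `inf {a + b | a, b ∈ A} = 0`
and `d (p a) (p b) ≤ a + b`.  (Values of `p` outside `A` are irrelevant.) -/
def IsCauchySeqOn {W M : Type*} [CompleteDistMonoid W] (d : M → M → W)
    (A : Set W) (p : W → M) : Prop :=
  (∀ a ∈ A, a ≠ 0) ∧
  sInf {c : W | ∃ a ∈ A, ∃ b ∈ A, c = a + b} = 0 ∧
  ∀ a ∈ A, ∀ b ∈ A, d (p a) (p b) ≤ a + b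

/-- The Cauchy sequence `p : A → M` converges to `x`. -/
def ConvergesTo {W M : Type*} [CompleteDistMonoid W] (d : M → M → W)
    (A : Set W) (p : W → M) (x : M) : Prop :=
  (⨆ a ∈ {a : W | a ≠ 0}, ⨅ b ∈ {b ∈ A | b ≤ a}, d x (p b)) = 0 ∧
  (⨆ a ∈ {a : W | a ≠ 0}, ⨅ b ∈ {b ∈ A | b ≤ a}, d (p b) x) = 0

/-- `(M, d)` is Cauchy complete: every Cauchy sequence converges to some element. -/
def CauchyComplete {W M : Type*} [CompleteDistMonoid W] (d : M → M → W) : Prop :=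
  ∀ (A : Set W) (p : W → M), IsCauchySeqOn d A p → ∃ x : M, ConvergesTo d A p x

/-- The distance `d_C` between two Cauchy sequences. -/
noncomputable def dC {W M : Type*} [CompleteDistMonoid W] (d : M → M → W)
    (A : Set W) (p : W → M) (B : Set W) (q : W → M) : W :=
  ⨆ c ∈ {c : W | c ≠ 0}, ⨅ a ∈ {a ∈ A | a ≤ c}, ⨅ b ∈ {b ∈ B | b ≤ c}, d (p a) (q b)

/-- Equivalence of Cauchy sequences: `p ≡ q` iff `d_C(p,q) = 0` and `d_C(q,p) = 0`. -/
def CEquiv {W M : Type*} [CompleteDistMonoid W] (d : M → M → W)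
    (A : Set W) (p : W → M) (B : Set W) (q : W → M) : Prop :=
  dC d A p B q = 0 ∧ dC d B q A p = 0

/-!
Fix scales `u, v ≠ 0` and a cutoff `c ≠ 0`. For `a, e ≤ c` and `b ≤ min c u`, `b' ≤ min c v`,
the triangle inequality through `q b` and `q b'`, together with `d (q b) (q b') ≤ b + b' ≤ u + v`,
gives `d (p a) (r e) ≤ (u + v) + d (p a) (q b) + d (q b') (r e)`. Since addition distributes
over infima, this passes to the truncated infima defining `d_C`, so
`d_C(p, r) ≤ (u + v) + d_C(p, q) + d_C(q, r)`; continuity at `0` lets `u + v` go to `0`.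
-/

namespace CompleteDistMonoid

variable {W : Type*} [CompleteDistMonoid W]

instance : IsOrderedAddMonoid W where
  add_le_add_left a b h c := CompleteDistMonoid.add_le_add_right a b h c

theorem add_biInf {ι : Type*} (s : Set ι) (f : ι → W) (k : W) :
    k + ⨅ i ∈ s, f i = ⨅ i ∈ s, k + f i := by
  rw [← sInf_image, add_sInf, iInf_image]
  simp only [add_comm]

theorem le_add_biInf₂ {ι κ : Type*} {s : Set ι} {t : Set κ} {f : ι → κ → W}
    {x k : W} (h : ∀ i ∈ s, ∀ j ∈ t, x ≤ k + f i j) :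
    x ≤ k + ⨅ i ∈ s, ⨅ j ∈ t, f i j := by
  rw [add_biInf]
  exact le_iInf₂ fun i hi => by rw [add_biInf]; exact le_iInf₂ (h i hi)

theorem le_biInf₂_add {ι κ : Type*} {s : Set ι} {t : Set κ} {f : ι → κ → W}
    {x k : W} (h : ∀ i ∈ s, ∀ j ∈ t, x ≤ f i j + k) :
    x ≤ (⨅ i ∈ s, ⨅ j ∈ t, f i j) + k := by
  rw [add_comm]
  exact le_add_biInf₂ fun i hi j hj => (h i hi j hj).trans_eq (add_comm _ _)

theorem min_ne_zero {a b : W} (ha : a ≠ 0) (hb : b ≠ 0) : min a b ≠ 0 := by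
  rcases min_choice a b with h | h <;> rw [h] <;> assumption

theorem le_of_forall_le_add (hW : ContinuousAtZero W) {x y : W}
    (h : ∀ u v : W, u ≠ 0 → v ≠ 0 → x ≤ u + v + y) : x ≤ y := by
  have hx : x ≤ y + sInf {c : W | ∃ a b : W, a ≠ 0 ∧ b ≠ 0 ∧ c = a + b} := by
    rw [add_sInf]
    exact le_iInf₂ fun _ ⟨u, v, hu, hv, hw⟩ => hw ▸ h u v hu hv
  rwa [hW, add_zero] at hx

end CompleteDistMonoid

open CompleteDistMonoid

section dCAt

variable {W M : Type*} [CompleteDistMonoid W] (d : M → M → W)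

noncomputable def dCAt (A : Set W) (p : W → M) (B : Set W) (q : W → M) (c : W) : W :=
  ⨅ a ∈ {a ∈ A | a ≤ c}, ⨅ b ∈ {b ∈ B | b ≤ c}, d (p a) (q b)

variable {d}

theorem dCAt_le_dC {A B : Set W} {p q : W → M} {c : W} (hc : c ≠ 0) :
    dCAt d A p B q c ≤ dC d A p B q :=
  le_iSup₂ (f := fun c (_ : c ≠ 0) => dCAt d A p B q c) c hc

theorem dC_le_of_forall {A B : Set W} {p q : W → M} {x : W}
    (h : ∀ c : W, c ≠ 0 → dCAt d A p B q c ≤ x) : dC d A p B q ≤ x :=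
  iSup₂_le h

theorem dCAt_le_add_dCAt_add_dCAt (htri : ∀ x y z : M, d x z ≤ d x y + d y z)
    {A B C : Set W} {p q r : W → M} (hq : ∀ b ∈ B, ∀ b' ∈ B, d (q b) (q b') ≤ b + b')
    {c s t : W} (hs : s ≤ c) (ht : t ≤ c) :
    dCAt d A p C r c ≤ (s + t) + (dCAt d A p B q s + dCAt d B q C r t) := by
  rw [add_left_comm]
  refine le_biInf₂_add fun a ⟨haA, has⟩ b ⟨hbB, hbs⟩ => ?_
  rw [← add_assoc]
  refine le_add_biInf₂ fun b' ⟨hb'B, hb't⟩ e ⟨heC, het⟩ => ?_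
  have hqq : d (q b) (q b') ≤ s + t := (hq b hbB b' hb'B).trans (add_le_add hbs hb't)
  calc dCAt d A p C r c ≤ d (p a) (r e) :=
        iInf₂_le_of_le a ⟨haA, has.trans hs⟩ (iInf₂_le e ⟨heC, het.trans ht⟩)
    _ ≤ d (p a) (q b) + (d (q b) (q b') + d (q b') (r e)) :=
        (htri _ _ _).trans (add_le_add_right (htri _ _ _) _)
    _ ≤ d (p a) (q b) + (s + t) + d (q b') (r e) := by
        rw [add_assoc]; gcongr

end dCAt

theorem stmt6_general {W M : Type*} [CompleteDistMonoid W] (hW : ContinuousAtZero W)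
    (d : M → M → W) (hd : IsWMetric d)
    (A B C : Set W) (p q r : W → M)
    (hq : IsCauchySeqOn d B q) :
    dC d A p C r ≤ dC d A p B q + dC d B q C r := by
  refine le_of_forall_le_add hW fun u v hu hv => dC_le_of_forall fun c hc => ?_
  calc dCAt d A p C r c
      ≤ (min c u + min c v) + (dCAt d A p B q (min c u) + dCAt d B q C r (min c v)) :=
        dCAt_le_add_dCAt_add_dCAt hd.2 hq.2.2 (min_le_left _ _) (min_le_left _ _)
    _ ≤ (u + v) + (dC d A p B q + dC d B q C r) := by
        gcongr
        exacts [min_le_right _ _, min_le_right _ _, dCAt_le_dC (min_ne_zero hc hu),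
          dCAt_le_dC (min_ne_zero hc hv)]

/-- Triangle inequality for the distance `d_C` between Cauchy sequences. -/
theorem stmt6 {W M : Type*} [CompleteDistMonoid W] (hW : ContinuousAtZero W)
    (d : M → M → W) (hd : IsWMetric d)
    (A B C : Set W) (p q r : W → M)
    (hp : IsCauchySeqOn d A p) (hq : IsCauchySeqOn d B q) (hr : IsCauchySeqOn d C r) :
    dC d A p C r ≤ dC d A p B q + dC d B q C r :=
  stmt6_general hW d hd A B C p q r hq
end

section
/- Let W be a continuous distance monoid, M a W-metric space, and p a Cauchy sequence on M. Then there is a maximal Cauchy sequence p* on M (one with domain all of W⁺) such that p* ≡ p. -/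
/-- Every Cauchy sequence is equivalent to a maximal one (with domain all of `W⁺`). -/
theorem stmt8 {W M : Type*} [CompleteDistMonoid W] (hW : ContinuousAtZero W)
    (d : M → M → W) (hd : IsWMetric d)
    (A : Set W) (p : W → M) (hp : IsCauchySeqOn d A p) :
    ∃ q : W → M, IsCauchySeqOn d {a : W | a ≠ 0} q ∧
      CEquiv d {a : W | a ≠ 0} q A p := by

  classical
  obtain ⟨hA0, hAinf, hAd⟩ := hp
  have hzle : ∀ x : W, (0:W) ≤ x := fun x =>
    le_of_eq_of_le CompleteDistMonoid.bot_eq_zero.symm bot_le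
  have hle0 : ∀ x : W, x ≤ 0 → x = 0 := fun x h => le_antisymm h (hzle x)
  have hmono : ∀ {a b c e : W}, a ≤ b → c ≤ e → a + c ≤ b + e := fun h1 h2 =>
    le_trans (CompleteDistMonoid.add_le_add_left _ _ h2 _)
      (CompleteDistMonoid.add_le_add_right _ _ h1 _)
  have hself : ∀ a b : W, a ≤ a + b := fun a b => by
    calc a = a + 0 := (add_zero a).symm
    _ ≤ a + b := CompleteDistMonoid.add_le_add_left _ _ (hzle b) a
  have key : ∀ c : W, c ≠ 0 → ∃ b, b ∈ A ∧ b < c := by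
    intro c hc
    by_contra h
    push_neg at h
    have hcle : c ≤ sInf {x : W | ∃ a ∈ A, ∃ b ∈ A, x = a + b} := by
      apply le_sInf
      rintro x ⟨a, ha, b, hb, rfl⟩
      exact le_trans (h a ha) (hself a b)
    rw [hAinf] at hcle
    exact hc (hle0 c hcle)
  set g : W → W := fun a => if h : a ≠ 0 then (key a h).choose else 0 with hg
  have hgA : ∀ a : W, a ≠ 0 → g a ∈ A := by
    intro a h
    simp only [hg, dif_pos h]
    exact (key a h).choose_spec.1
  have hglt : ∀ a : W, a ≠ 0 → g a < a := by
    intro a h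
    simp only [hg, dif_pos h]
    exact (key a h).choose_spec.2
  have hSc : ∀ c : W, c ≠ 0 →
      sInf {x : W | ∃ a, a ∈ A ∧ a ≤ c ∧ ∃ b, b ∈ A ∧ b ≤ c ∧ x = a + b} = 0 := by
    intro c hc
    set S : Set W := {x : W | ∃ a, a ∈ A ∧ a ≤ c ∧ ∃ b, b ∈ A ∧ b ≤ c ∧ x = a + b} with hS
    have hmin : min (sInf S) c ≤ sInf {x : W | ∃ a ∈ A, ∃ b ∈ A, x = a + b} := by
      apply le_sInf
      rintro x ⟨a, ha, b, hb, rfl⟩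
      by_cases h1 : a ≤ c
      · by_cases h2 : b ≤ c
        · exact le_trans (min_le_left _ _) (sInf_le ⟨a, ha, h1, b, hb, h2, rfl⟩)
        · refine le_trans (min_le_right _ _) (le_trans (le_of_not_ge h2) ?_)
          rw [add_comm]
          exact hself b a
      · exact le_trans (min_le_right _ _) (le_trans (le_of_not_ge h1) (hself a b))
    rw [hAinf] at hmin
    have hmin0 : min (sInf S) c = 0 := hle0 _ hmin
    rcases le_total (sInf S) c with h | h
    · rwa [min_eq_left h] at hmin0
    · rw [min_eq_right h] at hmin0
      exact absurd hmin0 hc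
  refine ⟨fun a => p (g a), ⟨fun a ha => ha, ?_, ?_⟩, ?_, ?_⟩
  · have hset : {c : W | ∃ a ∈ {a : W | a ≠ 0}, ∃ b ∈ {a : W | a ≠ 0}, c = a + b}
        = {c : W | ∃ a b : W, a ≠ 0 ∧ b ≠ 0 ∧ c = a + b} := by
      ext c
      constructor
      · rintro ⟨a, ha, b, hb, rfl⟩; exact ⟨a, b, ha, hb, rfl⟩
      · rintro ⟨a, b, ha, hb, rfl⟩; exact ⟨a, ha, b, hb, rfl⟩
    rw [hset]
    exact hW
  · intro a ha b hb
    exact le_trans (hAd _ (hgA a ha) _ (hgA b hb))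
      (hmono (le_of_lt (hglt a ha)) (le_of_lt (hglt b hb)))
  · apply hle0
    apply iSup₂_le
    intro c hc
    refine le_of_le_of_eq (le_sInf ?_) (hSc c hc)
    rintro x ⟨a, ha, hac, b, hb, hbc, rfl⟩
    refine le_trans (iInf₂_le a ⟨hA0 a ha, hac⟩) (le_trans (iInf₂_le b ⟨hb, hbc⟩) ?_)
    exact le_trans (hAd _ (hgA a (hA0 a ha)) _ hb)
      (hmono (le_of_lt (hglt a (hA0 a ha))) le_rfl)
  · apply hle0
    apply iSup₂_le
    intro c hc
    refine le_of_le_of_eq (le_sInf ?_) (hSc c hc)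
    rintro x ⟨a, ha, hac, b, hb, hbc, rfl⟩
    refine le_trans (iInf₂_le a ⟨ha, hac⟩) (le_trans (iInf₂_le b ⟨hA0 b hb, hbc⟩) ?_)
    exact le_trans (hAd _ ha _ (hgA b (hA0 b hb)))
      (hmono le_rfl (le_of_lt (hglt b (hA0 b hb))))
end

section
/- Let W be a continuous distance monoid, M a W-metric space, X a Cauchy complete W-metric space, and i : M → X a non-expanding map. Then there is a unique non-expanding map j : Cseq(M)/≡ → X such that j([x̂]) = i(x) for all x ∈ M, where x̂ is the constant Cauchy sequence with value x. -/
/-- The set of Cauchy sequences on `(M, d)` (a pair: domain and map). -/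
def CSeq {W M : Type*} [CompleteDistMonoid W] (d : M → M → W) :=
  {Ap : Set W × (W → M) // IsCauchySeqOn d Ap.1 Ap.2}

/-- The equivalence `≡` on Cauchy sequences. -/
def csRel {W M : Type*} [CompleteDistMonoid W] (d : M → M → W) (p q : CSeq d) : Prop :=
  CEquiv d p.1.1 p.1.2 q.1.1 q.1.2

/-- The quotient `Cseq(M)/≡` of the set of Cauchy sequences by `≡`. -/
def CQuot {W M : Type*} [CompleteDistMonoid W] (d : M → M → W) := Quot (csRel d)

/-- The induced distance on the quotient `Cseq(M)/≡`, computed on representatives. -/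
noncomputable def dQ {W M : Type*} [CompleteDistMonoid W] (d : M → M → W)
    (x y : CQuot d) : W :=
  dC d x.out.1.1 x.out.1.2 y.out.1.1 y.out.1.2


section Aux
variable {W : Type*} [CompleteDistMonoid W]

lemma wzero_le (a : W) : 0 ≤ a := CompleteDistMonoid.bot_eq_zero (W := W) ▸ bot_le
lemma wpos {a : W} (h : a ≠ 0) : 0 < a := lt_of_le_of_ne (wzero_le a) (Ne.symm h)
lemma wle_eq_zero {a : W} (h : a ≤ 0) : a = 0 := le_antisymm h (wzero_le a)
lemma wadd_le_wadd {a b c e : W} (h1 : a ≤ b) (h2 : c ≤ e) : a + c ≤ b + e :=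
  le_trans (CompleteDistMonoid.add_le_add_left c e h2 a)
    (CompleteDistMonoid.add_le_add_right a b h1 e)
lemma wle_add_right (a b : W) : a ≤ a + b := by
  calc a = a + 0 := (add_zero a).symm
  _ ≤ a + b := CompleteDistMonoid.add_le_add_left 0 b (wzero_le b) a
lemma wmin_ne {a b : W} (ha : a ≠ 0) (hb : b ≠ 0) : min a b ≠ 0 :=
  (lt_min (wpos ha) (wpos hb)).ne'
lemma wadd_iInf {ι : Sort*} (f : ι → W) (t : W) : t + (⨅ i, f i) = ⨅ i, (f i + t) := by
  rw [iInf, CompleteDistMonoid.add_sInf, iInf_range]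
lemma wiInf_add {ι : Sort*} (f : ι → W) (t : W) : (⨅ i, f i) + t = ⨅ i, (f i + t) := by
  rw [add_comm, wadd_iInf]
lemma wadd_biInf₂ {s s' : Set W} (g : W → W → W) (t : W) :
    t + (⨅ a ∈ s, ⨅ b ∈ s', g a b) = ⨅ a ∈ s, ⨅ b ∈ s', (g a b + t) := by
  rw [wadd_iInf]; simp only [wiInf_add]
lemma wbiInf₂_add {s s' : Set W} (g : W → W → W) (t : W) :
    (⨅ a ∈ s, ⨅ b ∈ s', g a b) + t = ⨅ a ∈ s, ⨅ b ∈ s', (g a b + t) := by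
  rw [add_comm, wadd_biInf₂]
lemma wbiInf₄ (sA sB sB' sC : Set W) (g1 g2 : W → W → W) (t : W) :
    (⨅ a ∈ sA, ⨅ b ∈ sB, ⨅ b' ∈ sB', ⨅ e ∈ sC, ((g2 b' e + t) + g1 a b))
      = (⨅ a ∈ sA, ⨅ b ∈ sB, g1 a b) + ((⨅ b' ∈ sB', ⨅ e ∈ sC, g2 b' e) + t) := by
  have inner : ∀ a b : W, (⨅ b' ∈ sB', ⨅ e ∈ sC, ((g2 b' e + t) + g1 a b))
      = g1 a b + ((⨅ b' ∈ sB', ⨅ e ∈ sC, g2 b' e) + t) := by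
    intro a b
    rw [← wadd_biInf₂ (fun b' e => g2 b' e + t) (g1 a b), ← wbiInf₂_add]
  simp only [inner]
  rw [← wbiInf₂_add]
lemma weq_zero_of_lt {s : W} (h : ∀ t : W, t ≠ 0 → s < t) : s = 0 := by
  by_contra hs
  exact lt_irrefl s (h s hs)
lemma wiSup₂_zero {s : Set W} {F : W → W} : (⨆ c ∈ s, F c) = 0 ↔ ∀ c ∈ s, F c = 0 := by
  constructor
  · intro h c hc
    exact wle_eq_zero (h ▸ le_iSup₂ (f := fun c _ => F c) c hc)
  · intro h
    exact wle_eq_zero (iSup₂_le fun c hc => (h c hc).le)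
lemma wle_of_forall_add (hW : ContinuousAtZero W) {s t : W}
    (h : ∀ u v : W, u ≠ 0 → v ≠ 0 → s ≤ t + (u + v)) : s ≤ t := by
  have h0 := CompleteDistMonoid.add_sInf {c : W | ∃ a b : W, a ≠ 0 ∧ b ≠ 0 ∧ c = a + b} t
  rw [hW, add_zero] at h0
  rw [h0]
  refine le_iInf₂ fun c hc => ?_
  obtain ⟨u, v, hu, hv, rfl⟩ := hc
  calc s ≤ t + (u + v) := h u v hu hv
  _ = (u + v) + t := add_comm _ _
lemma wsmall2 (hW : ContinuousAtZero W) {t : W} (ht : t ≠ 0) :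
    ∃ c : W, c ≠ 0 ∧ c + c < t := by
  have h : sInf {c : W | ∃ a b : W, a ≠ 0 ∧ b ≠ 0 ∧ c = a + b} < t := by
    rw [hW]; exact wpos ht
  obtain ⟨w, hw, hlt⟩ := sInf_lt_iff.mp h
  obtain ⟨a, b, ha, hb, rfl⟩ := hw
  exact ⟨min a b, wmin_ne ha hb,
    lt_of_le_of_lt (wadd_le_wadd (min_le_left a b) (min_le_right a b)) hlt⟩
lemma wsmall8 (hW : ContinuousAtZero W) {t : W} (ht : t ≠ 0) :
    ∃ c : W, c ≠ 0 ∧ c+c+c+c+c+c+c+c < t := by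
  obtain ⟨c1, h1, h1'⟩ := wsmall2 hW ht
  obtain ⟨c2, h2, h2'⟩ := wsmall2 hW h1
  obtain ⟨c3, h3, h3'⟩ := wsmall2 hW h2
  refine ⟨c3, h3, ?_⟩
  calc c3+c3+c3+c3+c3+c3+c3+c3 = ((c3+c3)+(c3+c3))+((c3+c3)+(c3+c3)) := by abel
  _ ≤ (c2+c2)+(c2+c2) := wadd_le_wadd (wadd_le_wadd h3'.le h3'.le) (wadd_le_wadd h3'.le h3'.le)
  _ ≤ c1 + c1 := wadd_le_wadd h2'.le h2'.le
  _ < t := h1'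
lemma wle_8 (m : W) : m + m ≤ m+m+m+m+m+m+m+m := by
  calc m + m ≤ (m+m)+(m+m+m+m+m+m) := wle_add_right _ _
  _ = m+m+m+m+m+m+m+m := by abel
lemma wle_8' (m : W) : m ≤ m+m+m+m+m+m+m+m := le_trans (wle_add_right m m) (wle_8 m)
lemma wbiInf_lt {s : Set W} {f : W → W} {t : W} (h : (⨅ a ∈ s, f a) < t) :
    ∃ a ∈ s, f a < t := by
  obtain ⟨a, ha⟩ := iInf_lt_iff.mp h
  obtain ⟨has, h2⟩ := iInf_lt_iff.mp ha
  exact ⟨a, has, h2⟩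

end Aux

section Metric
variable {W M X : Type*} [CompleteDistMonoid W]

lemma dzero {d : M → M → W} (hd : IsWMetric d) (x : M) : d x x = 0 := by
  have h := (hd.1 x x).mpr rfl
  rwa [max_self] at h

lemma weq_of_dists {d : M → M → W} (hd : IsWMetric d) {x y : M}
    (h1 : d x y ≤ 0) (h2 : d y x ≤ 0) : x = y :=
  (hd.1 x y).mp (wle_eq_zero (max_le h1 h2))

lemma cauchy_mem_le {d : M → M → W} {A : Set W} {p : W → M}
    (hp : IsCauchySeqOn d A p) {c : W} (hc : c ≠ 0) : ∃ a ∈ A, a ≤ c := by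
  have h : sInf {c : W | ∃ a ∈ A, ∃ b ∈ A, c = a + b} < c := by
    rw [hp.2.1]; exact wpos hc
  obtain ⟨w, hw, hlt⟩ := sInf_lt_iff.mp h
  obtain ⟨a, ha, b, hb, rfl⟩ := hw
  exact ⟨a, ha, le_trans (wle_add_right a b) hlt.le⟩

lemma cauchy_pair_lt {d : M → M → W} {A : Set W} {p : W → M}
    (hp : IsCauchySeqOn d A p) {c : W} (hc : c ≠ 0) :
    ∃ a ∈ A, ∃ b ∈ A, a ≤ c ∧ b ≤ c ∧ d (p a) (p b) < c := by
  have h : sInf {c : W | ∃ a ∈ A, ∃ b ∈ A, c = a + b} < c := by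
    rw [hp.2.1]; exact wpos hc
  obtain ⟨w, hw, hlt⟩ := sInf_lt_iff.mp h
  obtain ⟨a, ha, b, hb, rfl⟩ := hw
  exact ⟨a, ha, b, hb, le_trans (wle_add_right a b) hlt.le,
    le_trans (le_trans (wle_add_right b a) (add_comm b a ▸ le_refl (a+b))) hlt.le,
    lt_of_le_of_lt (hp.2.2 a ha b hb) hlt⟩

lemma dC_self {d : M → M → W} (hd : IsWMetric d) {A : Set W} {p : W → M}
    (hp : IsCauchySeqOn d A p) : dC d A p A p = 0 := by
  rw [dC, wiSup₂_zero]
  intro c hc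
  apply weq_zero_of_lt
  intro t ht
  obtain ⟨a, ha, b, hb, hac, hbc, hdd⟩ := cauchy_pair_lt hp (wmin_ne ht hc)
  have hac' : a ≤ c := le_trans hac (min_le_right t c)
  have hbc' : b ≤ c := le_trans hbc (min_le_right t c)
  calc (⨅ a ∈ {a ∈ A | a ≤ c}, ⨅ b ∈ {b ∈ A | b ≤ c}, d (p a) (p b))
      ≤ ⨅ b ∈ {b ∈ A | b ≤ c}, d (p a) (p b) := iInf₂_le a ⟨ha, hac'⟩
  _ ≤ d (p a) (p b) := iInf₂_le b ⟨hb, hbc'⟩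
  _ < min t c := hdd
  _ ≤ t := min_le_left t c

end Metric

section Big
variable {W M X : Type*} [CompleteDistMonoid W]

lemma limit_le_dC {d : M → M → W} {dX : X → X → W} (hW : ContinuousAtZero W)
    (hdX : IsWMetric dX) {i : M → X} (hi : ∀ x y : M, dX (i x) (i y) ≤ d x y)
    {A : Set W} {p : W → M} (hp : IsCauchySeqOn d A p)
    {B : Set W} {q : W → M} (hq : IsCauchySeqOn d B q)
    {x y : X} (hx : ConvergesTo dX A (i ∘ p) x) (hy : ConvergesTo dX B (i ∘ q) y) :
    dX x y ≤ dC d A p B q := by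
  apply wle_of_forall_add hW
  intro u v hu hv
  obtain ⟨c, hc, hc8⟩ := wsmall8 hW hu
  have hx1 : (⨅ b ∈ {b ∈ A | b ≤ c}, dX x ((i ∘ p) b)) < c := by
    rw [(wiSup₂_zero.mp hx.1) c hc]; exact wpos hc
  have hy2 : (⨅ b ∈ {b ∈ B | b ≤ c}, dX ((i ∘ q) b) y) < c := by
    rw [(wiSup₂_zero.mp hy.2) c hc]; exact wpos hc
  obtain ⟨a₀, ha₀m, ha₀⟩ := wbiInf_lt hx1
  obtain ⟨b₀, hb₀m, hb₀⟩ := wbiInf_lt hy2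
  obtain ⟨ha₀A, ha₀c⟩ := ha₀m
  obtain ⟨hb₀B, hb₀c⟩ := hb₀m
  have hfa : ∀ a ∈ A, a ≤ c → dX x (i (p a)) ≤ c + (c + c) := by
    intro a ha hac
    calc dX x (i (p a)) ≤ dX x (i (p a₀)) + dX (i (p a₀)) (i (p a)) := hdX.2 _ _ _
    _ ≤ c + (a₀ + a) := wadd_le_wadd ha₀.le (le_trans (hi _ _) (hp.2.2 a₀ ha₀A a ha))
    _ ≤ c + (c + c) := CompleteDistMonoid.add_le_add_left _ _ (wadd_le_wadd ha₀c hac) c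
  have hgb : ∀ b ∈ B, b ≤ c → dX (i (q b)) y ≤ c + (c + c) := by
    intro b hb hbc
    calc dX (i (q b)) y ≤ dX (i (q b)) (i (q b₀)) + dX (i (q b₀)) y := hdX.2 _ _ _
    _ ≤ (b + b₀) + c := wadd_le_wadd (le_trans (hi _ _) (hq.2.2 b hb b₀ hb₀B)) hb₀.le
    _ ≤ (c + c) + c := wadd_le_wadd (wadd_le_wadd hbc hb₀c) le_rfl
    _ = c + (c + c) := by abel
  have key : ∀ a ∈ {a ∈ A | a ≤ c}, ∀ b ∈ {b ∈ B | b ≤ c},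
      dX x y ≤ d (p a) (q b) + ((c + (c + c)) + (c + (c + c))) := by
    intro a ha b hb
    obtain ⟨haA, hac⟩ := ha
    obtain ⟨hbB, hbc⟩ := hb
    calc dX x y ≤ dX x (i (p a)) + dX (i (p a)) y := hdX.2 _ _ _
    _ ≤ dX x (i (p a)) + (dX (i (p a)) (i (q b)) + dX (i (q b)) y) :=
        CompleteDistMonoid.add_le_add_left _ _ (hdX.2 _ _ _) _
    _ ≤ (c+(c+c)) + (d (p a) (q b) + (c+(c+c))) :=
        wadd_le_wadd (hfa a haA hac) (wadd_le_wadd (hi _ _) (hgb b hbB hbc))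
    _ = d (p a) (q b) + ((c + (c + c)) + (c + (c + c))) := by abel
  have hE : dX x y ≤ (⨅ a ∈ {a ∈ A | a ≤ c}, ⨅ b ∈ {b ∈ B | b ≤ c}, d (p a) (q b))
      + ((c + (c + c)) + (c + (c + c))) := by
    rw [wbiInf₂_add]
    exact le_iInf₂ fun a ha => le_iInf₂ fun b hb => key a ha b hb
  have hED : (⨅ a ∈ {a ∈ A | a ≤ c}, ⨅ b ∈ {b ∈ B | b ≤ c}, d (p a) (q b)) ≤ dC d A p B q := by
    rw [dC]
    exact le_biSup
      (fun c => ⨅ a ∈ {a ∈ A | a ≤ c}, ⨅ b ∈ {b ∈ B | b ≤ c}, d (p a) (q b))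
      (show c ∈ {c : W | c ≠ 0} from hc)
  have hC6u : ((c + (c + c)) + (c + (c + c))) ≤ u := by
    have h1 : ((c + (c + c)) + (c + (c + c))) ≤ c+c+c+c+c+c+c+c := by
      calc ((c + (c + c)) + (c + (c + c))) ≤ ((c + (c + c)) + (c + (c + c))) + (c + c) :=
          wle_add_right _ _
      _ = c+c+c+c+c+c+c+c := by abel
    exact le_trans h1 hc8.le
  calc dX x y ≤ _ := hE
  _ ≤ dC d A p B q + u := wadd_le_wadd hED hC6u
  _ ≤ dC d A p B q + (u + v) := CompleteDistMonoid.add_le_add_left _ _ (wle_add_right u v) _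

lemma dC_triangle (hW : ContinuousAtZero W) {d : M → M → W} (hd : IsWMetric d)
    {A : Set W} {p : W → M} {B : Set W} {q : W → M} (hq : IsCauchySeqOn d B q)
    {C : Set W} {r : W → M} :
    dC d A p C r ≤ dC d A p B q + dC d B q C r := by
  apply wle_of_forall_add hW
  intro u v hu hv
  rw [dC]
  refine iSup₂_le fun c hc => ?_
  obtain ⟨m, hm, hm8⟩ := wsmall8 hW (wmin_ne hu hc)
  have hmu : m+m+m+m+m+m+m+m ≤ u := le_trans hm8.le (min_le_left u c)
  have hmc : m ≤ c := le_trans (wle_8' m) (le_trans hm8.le (min_le_right u c))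
  have key : ∀ a ∈ {a ∈ A | a ≤ m}, ∀ b ∈ {b ∈ B | b ≤ m}, ∀ b' ∈ {b ∈ B | b ≤ m},
      ∀ e ∈ {e ∈ C | e ≤ m},
      (⨅ a ∈ {a ∈ A | a ≤ c}, ⨅ e ∈ {e ∈ C | e ≤ c}, d (p a) (r e))
        ≤ ((d (q b') (r e) + (m + m)) + d (p a) (q b)) := by
    intro a ha b hb b' hb' e he
    calc (⨅ a ∈ {a ∈ A | a ≤ c}, ⨅ e ∈ {e ∈ C | e ≤ c}, d (p a) (r e))
        ≤ ⨅ e ∈ {e ∈ C | e ≤ c}, d (p a) (r e) := iInf₂_le a ⟨ha.1, le_trans ha.2 hmc⟩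
    _ ≤ d (p a) (r e) := iInf₂_le e ⟨he.1, le_trans he.2 hmc⟩
    _ ≤ d (p a) (q b) + d (q b) (r e) := hd.2 _ _ _
    _ ≤ d (p a) (q b) + (d (q b) (q b') + d (q b') (r e)) :=
        CompleteDistMonoid.add_le_add_left _ _ (hd.2 _ _ _) _
    _ ≤ d (p a) (q b) + ((b + b') + d (q b') (r e)) :=
        CompleteDistMonoid.add_le_add_left _ _
          (wadd_le_wadd (hq.2.2 b hb.1 b' hb'.1) le_rfl) _
    _ ≤ d (p a) (q b) + ((m + m) + d (q b') (r e)) :=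
        CompleteDistMonoid.add_le_add_left _ _
          (wadd_le_wadd (wadd_le_wadd hb.2 hb'.2) le_rfl) _
    _ = (d (q b') (r e) + (m + m)) + d (p a) (q b) := by abel
  have step : (⨅ a ∈ {a ∈ A | a ≤ c}, ⨅ e ∈ {e ∈ C | e ≤ c}, d (p a) (r e))
      ≤ (⨅ a ∈ {a ∈ A | a ≤ m}, ⨅ b ∈ {b ∈ B | b ≤ m}, d (p a) (q b))
        + ((⨅ b' ∈ {b ∈ B | b ≤ m}, ⨅ e ∈ {e ∈ C | e ≤ m}, d (q b') (r e)) + (m + m)) := by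
    rw [← wbiInf₄ {a ∈ A | a ≤ m} {b ∈ B | b ≤ m} {b ∈ B | b ≤ m} {e ∈ C | e ≤ m}
      (fun a b => d (p a) (q b)) (fun b' e => d (q b') (r e)) (m + m)]
    exact le_iInf₂ fun a ha => le_iInf₂ fun b hb => le_iInf₂ fun b' hb' =>
      le_iInf₂ fun e he => key a ha b hb b' hb' e he
  have h1 : (⨅ a ∈ {a ∈ A | a ≤ m}, ⨅ b ∈ {b ∈ B | b ≤ m}, d (p a) (q b)) ≤ dC d A p B q := by
    rw [dC]
    exact le_biSup
      (fun c => ⨅ a ∈ {a ∈ A | a ≤ c}, ⨅ b ∈ {b ∈ B | b ≤ c}, d (p a) (q b))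
      (show m ∈ {c : W | c ≠ 0} from hm)
  have h2 : (⨅ b' ∈ {b ∈ B | b ≤ m}, ⨅ e ∈ {e ∈ C | e ≤ m}, d (q b') (r e)) ≤ dC d B q C r := by
    rw [dC]
    exact le_biSup
      (fun c => ⨅ b' ∈ {b ∈ B | b ≤ c}, ⨅ e ∈ {e ∈ C | e ≤ c}, d (q b') (r e))
      (show m ∈ {c : W | c ≠ 0} from hm)
  have hmm : (m + m) ≤ u := le_trans (wle_8 m) hmu
  calc (⨅ a ∈ {a ∈ A | a ≤ c}, ⨅ e ∈ {e ∈ C | e ≤ c}, d (p a) (r e)) ≤ _ := step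
  _ ≤ dC d A p B q + (dC d B q C r + u) :=
      wadd_le_wadd h1 (wadd_le_wadd h2 hmm)
  _ = (dC d A p B q + dC d B q C r) + u := (add_assoc _ _ _).symm
  _ ≤ (dC d A p B q + dC d B q C r) + (u + v) :=
      CompleteDistMonoid.add_le_add_left _ _ (wle_add_right u v) _

lemma csRel_equivalence (hW : ContinuousAtZero W) {d : M → M → W} (hd : IsWMetric d) :
    Equivalence (csRel d) where
  refl P := ⟨dC_self hd P.2, dC_self hd P.2⟩
  symm h := ⟨h.2, h.1⟩
  trans := by
    intro P Q R h1 h2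
    constructor
    · apply wle_eq_zero
      calc dC d P.1.1 P.1.2 R.1.1 R.1.2
          ≤ dC d P.1.1 P.1.2 Q.1.1 Q.1.2 + dC d Q.1.1 Q.1.2 R.1.1 R.1.2 :=
            dC_triangle hW hd Q.2
      _ = 0 := by rw [h1.1, h2.1, add_zero]
    · apply wle_eq_zero
      calc dC d R.1.1 R.1.2 P.1.1 P.1.2
          ≤ dC d R.1.1 R.1.2 Q.1.1 Q.1.2 + dC d Q.1.1 Q.1.2 P.1.1 P.1.2 :=
            dC_triangle hW hd Q.2
      _ = 0 := by rw [h2.2, h1.2, add_zero]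

lemma const_cauchy (hW : ContinuousAtZero W) {d : M → M → W} (hd : IsWMetric d) (x : M) :
    IsCauchySeqOn d {a : W | a ≠ 0} (fun _ => x) := by
  refine ⟨fun a ha => ha, ?_, fun a _ b _ => by rw [dzero hd]; exact wzero_le _⟩
  have hset : {c : W | ∃ a ∈ {a : W | a ≠ 0}, ∃ b ∈ {a : W | a ≠ 0}, c = a + b}
      = {c : W | ∃ a b : W, a ≠ 0 ∧ b ≠ 0 ∧ c = a + b} := by
    ext c
    constructor
    · rintro ⟨a, ha, b, hb, rfl⟩; exact ⟨a, b, ha, hb, rfl⟩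
    · rintro ⟨a, b, ha, hb, rfl⟩; exact ⟨a, ha, b, hb, rfl⟩
  rw [hset]; exact hW

lemma const_converges {dX : X → X → W} (hdX : IsWMetric dX) (z : X) :
    ConvergesTo dX {a : W | a ≠ 0} (fun _ => z) z := by
  constructor <;>
  · rw [wiSup₂_zero]
    intro c hc
    refine le_antisymm ?_ (wzero_le _)
    calc (⨅ b ∈ {b ∈ {a : W | a ≠ 0} | b ≤ c}, dX z z) ≤ dX z z := iInf₂_le c ⟨hc, le_rfl⟩
    _ = 0 := dzero hdX z

lemma dC_to_const {d : M → M → W} {A : Set W} {p : W → M}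
    (hp : IsCauchySeqOn d A p) {a : W} (ha : a ∈ A) {m : W} (hm : m ≠ 0) :
    dC d A p {b : W | b ≠ 0} (fun _ => p a) ≤ m + a := by
  rw [dC]
  refine iSup₂_le fun c hc => ?_
  obtain ⟨a', ha'A, ha'⟩ := cauchy_mem_le hp (wmin_ne hc hm)
  calc (⨅ x ∈ {x ∈ A | x ≤ c}, ⨅ b ∈ {b ∈ {b : W | b ≠ 0} | b ≤ c}, d (p x) (p a))
      ≤ ⨅ b ∈ {b ∈ {b : W | b ≠ 0} | b ≤ c}, d (p a') (p a) :=
        iInf₂_le a' ⟨ha'A, le_trans ha' (min_le_left c m)⟩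
  _ ≤ d (p a') (p a) := iInf₂_le c ⟨hc, le_rfl⟩
  _ ≤ a' + a := hp.2.2 a' ha'A a ha
  _ ≤ m + a := wadd_le_wadd (le_trans ha' (min_le_right c m)) le_rfl

lemma dC_from_const {d : M → M → W} {A : Set W} {p : W → M}
    (hp : IsCauchySeqOn d A p) {a : W} (ha : a ∈ A) {m : W} (hm : m ≠ 0) :
    dC d {b : W | b ≠ 0} (fun _ => p a) A p ≤ m + a := by
  rw [dC]
  refine iSup₂_le fun c hc => ?_
  obtain ⟨a', ha'A, ha'⟩ := cauchy_mem_le hp (wmin_ne hc hm)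
  calc (⨅ x ∈ {x ∈ {b : W | b ≠ 0} | x ≤ c}, ⨅ b ∈ {b ∈ A | b ≤ c}, d (p a) (p b))
      ≤ ⨅ b ∈ {b ∈ A | b ≤ c}, d (p a) (p b) := iInf₂_le c ⟨hc, le_rfl⟩
  _ ≤ d (p a) (p a') := iInf₂_le a' ⟨ha'A, le_trans ha' (min_le_left c m)⟩
  _ ≤ a + a' := hp.2.2 a ha a' ha'A
  _ ≤ a + m := CompleteDistMonoid.add_le_add_left _ _ (le_trans ha' (min_le_right c m)) _
  _ = m + a := add_comm _ _

end Big

section Main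
variable {W M X : Type*} [CompleteDistMonoid W]

lemma cauchy_image {d : M → M → W} {dX : X → X → W} {i : M → X}
    (hi : ∀ x y : M, dX (i x) (i y) ≤ d x y) {A : Set W} {p : W → M}
    (hp : IsCauchySeqOn d A p) : IsCauchySeqOn dX A (i ∘ p) :=
  ⟨hp.1, hp.2.1, fun a ha b hb => le_trans (hi _ _) (hp.2.2 a ha b hb)⟩

noncomputable def flim {d : M → M → W} {dX : X → X → W} (hXcc : CauchyComplete dX)
    {i : M → X} (hi : ∀ x y : M, dX (i x) (i y) ≤ d x y) (P : CSeq d) : X :=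
  Classical.choose (hXcc P.1.1 (i ∘ P.1.2) (cauchy_image hi P.2))

lemma flim_spec {d : M → M → W} {dX : X → X → W} (hXcc : CauchyComplete dX)
    {i : M → X} (hi : ∀ x y : M, dX (i x) (i y) ≤ d x y) (P : CSeq d) :
    ConvergesTo dX P.1.1 (i ∘ P.1.2) (flim hXcc hi P) :=
  Classical.choose_spec (hXcc P.1.1 (i ∘ P.1.2) (cauchy_image hi P.2))

end Main

/-- Universal property of the Cauchy completion `Cseq(M)/≡`: a non-expanding map `i` from
`M` into a Cauchy complete `W`-metric space `X` extends uniquely to a non-expanding map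
`j` on the quotient with `j [x̂] = i x` for the constant sequences `x̂`. -/
theorem stmt12 {W M X : Type*} [CompleteDistMonoid W] (hW : ContinuousAtZero W)
    (d : M → M → W) (hd : IsWMetric d)
    (dX : X → X → W) (hdX : IsWMetric dX) (hXcc : CauchyComplete dX)
    (i : M → X) (hi : ∀ x y : M, dX (i x) (i y) ≤ d x y) :
    ∃! j : CQuot d → X,
      (∀ u v : CQuot d, dX (j u) (j v) ≤ dQ d u v) ∧
      ∀ (x : M) (px : CSeq d), px.1.1 = {a : W | a ≠ 0} → px.1.2 = (fun _ => x) →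
        j (Quot.mk (csRel d) px) = i x := by
  have heqv := csRel_equivalence hW hd (M := M)
  have hwd : ∀ P Q : CSeq d, csRel d P Q → flim hXcc hi P = flim hXcc hi Q := by
    intro P Q hPQ
    refine weq_of_dists hdX ?_ ?_
    · have h := limit_le_dC hW hdX hi P.2 Q.2 (flim_spec hXcc hi P) (flim_spec hXcc hi Q)
      rwa [hPQ.1] at h
    · have h := limit_le_dC hW hdX hi Q.2 P.2 (flim_spec hXcc hi Q) (flim_spec hXcc hi P)
      rwa [hPQ.2] at h
  refine ⟨Quot.lift (flim hXcc hi) hwd, ⟨?_, ?_⟩, ?_⟩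
  · -- non-expansion
    intro u v
    have hu : Quot.lift (flim hXcc hi) hwd u = flim hXcc hi u.out := by
      conv_lhs => rw [← Quot.out_eq u]
    have hv : Quot.lift (flim hXcc hi) hwd v = flim hXcc hi v.out := by
      conv_lhs => rw [← Quot.out_eq v]
    rw [hu, hv, dQ]
    exact limit_le_dC hW hdX hi u.out.2 v.out.2
      (flim_spec hXcc hi u.out) (flim_spec hXcc hi v.out)
  · -- constants
    intro x px hA hp
    show flim hXcc hi px = i x
    have hconst : ConvergesTo dX px.1.1 (i ∘ px.1.2) (i x) := by
      rw [hA, hp]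
      exact const_converges hdX (i x)
    refine weq_of_dists hdX ?_ ?_
    · have h := limit_le_dC hW hdX hi px.2 px.2 (flim_spec hXcc hi px) hconst
      rwa [dC_self hd px.2] at h
    · have h := limit_le_dC hW hdX hi px.2 px.2 hconst (flim_spec hXcc hi px)
      rwa [dC_self hd px.2] at h
  · -- uniqueness
    rintro j' ⟨hj'1, hj'2⟩
    funext u
    have hju : Quot.lift (flim hXcc hi) hwd u = flim hXcc hi u.out := by
      conv_lhs => rw [← Quot.out_eq u]
    rw [hju]
    have hbound : ∀ t c : W, t ≠ 0 → c ≠ 0 → ∃ a ∈ u.out.1.1, a ≤ c ∧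
        dX (j' u) (i (u.out.1.2 a)) < t ∧ dX (i (u.out.1.2 a)) (j' u) < t := by
      intro t c ht hc
      obtain ⟨e, he, he2⟩ := wsmall2 hW (wmin_ne ht hc)
      obtain ⟨a, haA, hae⟩ := cauchy_mem_le u.out.2 he
      have haec : a ≤ c :=
        le_trans hae (le_trans (wle_add_right e e) (le_trans he2.le (min_le_right t c)))
      have heat : e + a < t :=
        lt_of_le_of_lt (CompleteDistMonoid.add_le_add_left _ _ hae e)
          (lt_of_lt_of_le he2 (min_le_left t c))
      set xa := u.out.1.2 a with hxa
      have hPaC : IsCauchySeqOn d {b : W | b ≠ 0} (fun _ => xa) := const_cauchy hW hd xa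
      set Pa : CSeq d := ⟨({b : W | b ≠ 0}, fun _ => xa), hPaC⟩ with hPa
      have hval : j' (Quot.mk (csRel d) Pa) = i xa := hj'2 xa Pa rfl rfl
      have hrel : csRel d (Quot.mk (csRel d) Pa).out Pa :=
        heqv.eqvGen_iff.mp (Quot.eqvGen_exact (Quot.out_eq _))
      refine ⟨a, haA, haec, ?_, ?_⟩
      · have hb1 : dX (j' u) (i xa) ≤ (e + a) + 0 := by
          calc dX (j' u) (i xa) = dX (j' u) (j' (Quot.mk (csRel d) Pa)) := by rw [hval]
          _ ≤ dQ d u (Quot.mk (csRel d) Pa) := hj'1 _ _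
          _ = dC d u.out.1.1 u.out.1.2 (Quot.mk (csRel d) Pa).out.1.1
              (Quot.mk (csRel d) Pa).out.1.2 := rfl
          _ ≤ dC d u.out.1.1 u.out.1.2 Pa.1.1 Pa.1.2
              + dC d Pa.1.1 Pa.1.2 (Quot.mk (csRel d) Pa).out.1.1
                (Quot.mk (csRel d) Pa).out.1.2 := dC_triangle hW hd Pa.2
          _ ≤ (e + a) + 0 :=
              wadd_le_wadd (dC_to_const u.out.2 haA he) (le_of_eq hrel.2)
        calc dX (j' u) (i xa) ≤ (e + a) + 0 := hb1
        _ = e + a := add_zero _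
        _ < t := heat
      · have hb2 : dX (i xa) (j' u) ≤ 0 + (e + a) := by
          calc dX (i xa) (j' u) = dX (j' (Quot.mk (csRel d) Pa)) (j' u) := by rw [hval]
          _ ≤ dQ d (Quot.mk (csRel d) Pa) u := hj'1 _ _
          _ = dC d (Quot.mk (csRel d) Pa).out.1.1 (Quot.mk (csRel d) Pa).out.1.2
              u.out.1.1 u.out.1.2 := rfl
          _ ≤ dC d (Quot.mk (csRel d) Pa).out.1.1 (Quot.mk (csRel d) Pa).out.1.2
                Pa.1.1 Pa.1.2 + dC d Pa.1.1 Pa.1.2 u.out.1.1 u.out.1.2 :=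
              dC_triangle hW hd Pa.2
          _ ≤ 0 + (e + a) :=
              wadd_le_wadd (le_of_eq hrel.1) (dC_from_const u.out.2 haA he)
        calc dX (i xa) (j' u) ≤ 0 + (e + a) := hb2
        _ = e + a := zero_add _
        _ < t := heat
    have hconv : ConvergesTo dX u.out.1.1 (i ∘ u.out.1.2) (j' u) := by
      constructor
      · rw [wiSup₂_zero]
        intro c hc
        apply weq_zero_of_lt
        intro t ht
        obtain ⟨a, haA, hac, h1, _⟩ := hbound t c ht hc
        calc (⨅ b ∈ {b ∈ u.out.1.1 | b ≤ c}, dX (j' u) ((i ∘ u.out.1.2) b))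
            ≤ dX (j' u) (i (u.out.1.2 a)) := iInf₂_le a ⟨haA, hac⟩
        _ < t := h1
      · rw [wiSup₂_zero]
        intro c hc
        apply weq_zero_of_lt
        intro t ht
        obtain ⟨a, haA, hac, _, h2⟩ := hbound t c ht hc
        calc (⨅ b ∈ {b ∈ u.out.1.1 | b ≤ c}, dX ((i ∘ u.out.1.2) b) (j' u))
            ≤ dX (i (u.out.1.2 a)) (j' u) := iInf₂_le a ⟨haA, hac⟩
        _ < t := h2
    refine weq_of_dists hdX ?_ ?_
    · have h := limit_le_dC hW hdX hi u.out.2 u.out.2 hconv (flim_spec hXcc hi u.out)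
      rwa [dC_self hd u.out.2] at h
    · have h := limit_le_dC hW hdX hi u.out.2 u.out.2 (flim_spec hXcc hi u.out) hconv
      rwa [dC_self hd u.out.2] at h
end

section
/- Let W be a continuous distance monoid with coinit(W) = ω and let α : ω → W⁺ be an initial sequence with 3·α(n+1) ≤ α(n) for all n ∈ ω. Let N be a Cauchy complete W-metric space, g : N → N a non-expanding map, and D ⊆ N a subset with g[D] ⊆ D such that every point of N is the limit of some Cauchy sequence with range contained in D. Then the following are equivalent: (a) there exists a sequence ⟨x_i⟩_{i ∈ ω} of elements of D such that for all i, j ∈ ω, d(x_i, x_j) ≤ α(i) + α(j), d(x_i, g(x_i)) ≤ α(i), and d(g(x_i), x_i) ≤ α(i) (equivalently, the tree of finite sequences in D satisfying these conditions, ordered by end-extension, is ill-founded); (b) there exists x ∈ N with g(x) = x. -/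
section Helpers

lemma smul3 {M : Type*} [AddCommMonoid M] (a : M) : (3:ℕ) • a = a + a + a := by
  norm_num [succ_nsmul, two_nsmul]

variable {W : Type*} [CompleteDistMonoid W]

lemma wadd_le {a b c d : W} (h1 : a ≤ b) (h2 : c ≤ d) : a + c ≤ b + d :=
  le_trans (CompleteDistMonoid.add_le_add_right a b h1 c)
    (CompleteDistMonoid.add_le_add_left c d h2 b)

lemma wle_add_left (a b : W) : a ≤ b + a := by
  calc a = 0 + a := (zero_add a).symm
  _ ≤ b + a := wadd_le (wzero_le b) le_rfl

lemma wsmall (hW : ContinuousAtZero W) {w : W} (hw : w ≠ 0) :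
    ∃ u v : W, u ≠ 0 ∧ v ≠ 0 ∧ u + v < w := by
  have h0 : sInf {c : W | ∃ a b : W, a ≠ 0 ∧ b ≠ 0 ∧ c = a + b} < w := by
    rw [hW]; exact wpos hw
  obtain ⟨c, ⟨u, v, hu, hv, rfl⟩, hc⟩ := sInf_lt_iff.mp h0
  exact ⟨u, v, hu, hv, hc⟩

lemma wextract {A : Set W} {f : W → W}
    (h : (⨆ a ∈ {a : W | a ≠ 0}, ⨅ b ∈ {b ∈ A | b ≤ a}, f b) = 0)
    {a ε : W} (ha : a ≠ 0) (hε : ε ≠ 0) : ∃ b ∈ A, b ≤ a ∧ f b ≤ ε := by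
  have h1 : (⨅ b ∈ {b ∈ A | b ≤ a}, f b) = 0 := by
    apply le_antisymm
    · rw [← h]
      exact le_iSup₂ (f := fun a _ => ⨅ b ∈ {b ∈ A | b ≤ a}, f b) a ha
    · exact wzero_le _
  by_contra hc
  push_neg at hc
  have h2 : ε ≤ ⨅ b ∈ {b ∈ A | b ≤ a}, f b :=
    le_iInf₂ fun b hb => (hc b hb.1 hb.2).le
  exact hε (le_antisymm (h2.trans h1.le) (wzero_le ε))

end Helpers

/-- Fixed-point criterion when `coinit W = ω`: given an initial sequence `α : ω → W⁺`
with `3 • α (k+1) ≤ α k`, a Cauchy complete `W`-metric space `N`, a non-expanding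
`g : N → N` and a dense `D ⊆ N` with `g[D] ⊆ D`, the map `g` has a fixed point iff there
is a sequence `⟨x_i⟩` in `D` with `d (x_i) (x_j) ≤ α i + α j`,
`d (x_i) (g x_i) ≤ α i` and `d (g x_i) (x_i) ≤ α i`. -/
theorem stmt13 {W N : Type*} [CompleteDistMonoid W] (hW : ContinuousAtZero W)
    (hco : coinit W = Ordinal.omega0)
    (α : ℕ → W) (hα0 : ∀ k : ℕ, α k ≠ 0)
    (hαanti : ∀ i j : ℕ, i ≤ j → α j ≤ α i)
    (hαcoinit : ∀ a : W, a ≠ 0 → ∃ k : ℕ, α k ≤ a)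
    (hα3 : ∀ k : ℕ, 3 • α (k + 1) ≤ α k)
    (dN : N → N → W) (hdN : IsWMetric dN) (hNcc : CauchyComplete dN)
    (g : N → N) (hg : ∀ x y : N, dN (g x) (g y) ≤ dN x y)
    (D : Set N) (hgD : ∀ x ∈ D, g x ∈ D)
    (hdense : ∀ x : N, ∃ (A : Set W) (p : W → N), IsCauchySeqOn dN A p ∧
      (∀ a ∈ A, p a ∈ D) ∧ ConvergesTo dN A p x) :
    (∃ x : ℕ → N, (∀ i : ℕ, x i ∈ D) ∧
        (∀ i j : ℕ, dN (x i) (x j) ≤ α i + α j) ∧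
        ∀ i : ℕ, dN (x i) (g (x i)) ≤ α i ∧ dN (g (x i)) (x i) ≤ α i) ↔
      ∃ x : N, g x = x  := by
  classical
  have wle_all_zero : ∀ w : W, (∀ c : W, c ≠ 0 → w ≤ c) → w = 0 := by
    intro w hwc
    by_contra hw
    obtain ⟨u, v, hu, hv, huv⟩ := wsmall hW hw
    have huv0 : u + v ≠ 0 := fun h =>
      hu (le_antisymm (h ▸ wle_add_right u v) (wzero_le u))
    exact absurd (hwc _ huv0) (not_le.mpr huv)
  have key2 : ∀ c : W, c ≠ 0 → ∃ k : ℕ, α k + α k ≤ c := by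
    intro c hc
    obtain ⟨u, v, hu, hv, huv⟩ := wsmall hW hc
    obtain ⟨k1, hk1⟩ := hαcoinit u hu
    obtain ⟨k2, hk2⟩ := hαcoinit v hv
    refine ⟨max k1 k2, ?_⟩
    calc α (max k1 k2) + α (max k1 k2) ≤ u + v :=
          wadd_le ((hαanti k1 _ (le_max_left _ _)).trans hk1)
            ((hαanti k2 _ (le_max_right _ _)).trans hk2)
      _ ≤ c := huv.le
  have key6 : ∀ c : W, c ≠ 0 → ∃ k : ℕ,
      α k + (α k + (α k + (α k + (α k + α k)))) ≤ c := by
    intro c hc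
    obtain ⟨k1, h1⟩ := key2 c hc
    obtain ⟨k2', h2'⟩ := key2 (α k1) (hα0 k1)
    set m2 := max k1 k2' with hm2def
    have hm2 : α m2 + α m2 ≤ α k1 :=
      (wadd_le (hαanti k2' m2 (le_max_right _ _)) (hαanti k2' m2 (le_max_right _ _))).trans h2'
    have hm2le : α m2 ≤ α k1 := hαanti k1 m2 (le_max_left _ _)
    obtain ⟨k3', h3'⟩ := key2 (α m2) (hα0 m2)
    set m3 := max m2 k3' with hm3def
    have hm3 : α m3 + α m3 ≤ α m2 :=
      (wadd_le (hαanti k3' m3 (le_max_right _ _)) (hαanti k3' m3 (le_max_right _ _))).trans h3'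
    refine ⟨m3, ?_⟩
    have he : α m3 + (α m3 + (α m3 + (α m3 + (α m3 + α m3))))
        = ((α m3 + α m3) + (α m3 + α m3)) + (α m3 + α m3) := by abel
    rw [he]
    calc ((α m3 + α m3) + (α m3 + α m3)) + (α m3 + α m3)
        ≤ (α m2 + α m2) + α m2 := wadd_le (wadd_le hm3 hm3) hm3
      _ ≤ α k1 + α k1 := wadd_le hm2 hm2le
      _ ≤ c := h1
  have h3le : ∀ k : ℕ, α (k+1) + (α (k+1) + α (k+1)) ≤ α k := by
    intro k
    have h := hα3 k
    rw [smul3] at h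
    calc α (k+1) + (α (k+1) + α (k+1)) = α (k+1) + α (k+1) + α (k+1) := by abel
      _ ≤ α k := h
  have h2le : ∀ k : ℕ, α (k+1) + α (k+1) ≤ α k := fun k =>
    (wadd_le le_rfl (wle_add_left (α (k+1)) (α (k+1)))).trans (h3le k)
  constructor
  · rintro ⟨x, hxD, hxd, hxfix⟩
    have hchoice : ∀ w : W, ∃ i : ℕ, w ∈ Set.range α → α i = w := by
      intro w
      by_cases h : w ∈ Set.range α
      · obtain ⟨i, hi⟩ := h; exact ⟨i, fun _ => hi⟩
      · exact ⟨0, fun hw => absurd hw h⟩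
    choose idx hidx using hchoice
    have hcauchy : IsCauchySeqOn dN (Set.range α) (fun w => x (idx w)) := by
      refine ⟨?_, ?_, ?_⟩
      · rintro a ⟨i, rfl⟩; exact hα0 i
      · apply le_antisymm _ (wzero_le _)
        by_contra hlt
        have hne : sInf {c : W | ∃ a ∈ Set.range α, ∃ b ∈ Set.range α, c = a + b} ≠ 0 :=
          fun h => hlt (le_of_eq h)
        obtain ⟨u, v, hu, hv, huv⟩ := wsmall hW hne
        obtain ⟨i, hi⟩ := hαcoinit u hu
        obtain ⟨j, hj⟩ := hαcoinit v hv
        have hmem : α i + α j ∈ {c : W | ∃ a ∈ Set.range α, ∃ b ∈ Set.range α, c = a + b} :=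
          ⟨α i, ⟨i, rfl⟩, α j, ⟨j, rfl⟩, rfl⟩
        exact absurd ((sInf_le hmem).trans (wadd_le hi hj)) (not_le.mpr huv)
      · intro a ha b hb
        have h1 := hxd (idx a) (idx b)
        rwa [hidx a ha, hidx b hb] at h1
    obtain ⟨z, hz1, hz2⟩ := hNcc (Set.range α) (fun w => x (idx w)) hcauchy
    refine ⟨z, ?_⟩
    have claim : ∀ c : W, c ≠ 0 → dN z (g z) ≤ c ∧ dN (g z) z ≤ c := by
      intro c hc
      obtain ⟨k, hk⟩ := key6 c hc
      obtain ⟨b, hbA, hba, hbd⟩ := wextract hz1 (hα0 k) (hα0 k)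
      obtain ⟨b', hb'A, hb'a, hb'd⟩ := wextract hz2 (hα0 k) (hα0 k)
      set a := α k with hadef
      set y : N := x (idx b') with hydef
      set y' : N := x (idx b) with hy'def
      have hbb' : dN y' y ≤ a + a :=
        (hcauchy.2.2 b hbA b' hb'A).trans (wadd_le hba hb'a)
      have hfix1 : dN y (g y) ≤ a := by
        calc dN y (g y) ≤ α (idx b') := (hxfix (idx b')).1
          _ = b' := hidx b' hb'A
          _ ≤ a := hb'a
      have hfix2 : dN (g y) y ≤ a := by
        calc dN (g y) y ≤ α (idx b') := (hxfix (idx b')).2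
          _ = b' := hidx b' hb'A
          _ ≤ a := hb'a
      have hzy : dN z y ≤ a + (a + a) := by
        calc dN z y ≤ dN z y' + dN y' y := hdN.2 _ _ _
          _ ≤ a + (a + a) := wadd_le hbd hbb'
      have hyz : dN y z ≤ a := hb'd
      have h56 : (a + (a + a)) + (a + a) ≤ a + (a + (a + (a + (a + a)))) := by
        have e1 : (a + (a + a)) + (a + a) = a + (a + (a + (a + a))) := by abel
        rw [e1]
        exact wadd_le le_rfl (wadd_le le_rfl (wadd_le le_rfl (wle_add_left (a + a) a)))
      constructor
      · calc dN z (g z) ≤ dN z y + dN y (g z) := hdN.2 _ _ _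
          _ ≤ dN z y + (dN y (g y) + dN (g y) (g z)) := wadd_le le_rfl (hdN.2 _ _ _)
          _ ≤ (a + (a + a)) + (a + a) := wadd_le hzy (wadd_le hfix1 ((hg y z).trans hyz))
          _ ≤ a + (a + (a + (a + (a + a)))) := h56
          _ ≤ c := hk
      · calc dN (g z) z ≤ dN (g z) (g y) + dN (g y) z := hdN.2 _ _ _
          _ ≤ dN z y + (dN (g y) y + dN y z) := wadd_le (hg z y) (hdN.2 _ _ _)
          _ ≤ (a + (a + a)) + (a + a) := wadd_le hzy (wadd_le hfix2 hyz)
          _ ≤ a + (a + (a + (a + (a + a)))) := h56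
          _ ≤ c := hk
    have hz0 : dN z (g z) = 0 := wle_all_zero _ (fun c hc => (claim c hc).1)
    have hz0' : dN (g z) z = 0 := wle_all_zero _ (fun c hc => (claim c hc).2)
    exact (hdN.1 (g z) z).mp (by rw [hz0, hz0']; simp)
  · rintro ⟨z, hz⟩
    obtain ⟨A, p, hp, hpD, hconv1, hconv2⟩ := hdense z
    have hext1 : ∀ i : ℕ, ∃ b ∈ A, b ≤ α (i+2) ∧ dN z (p b) ≤ α (i+2) := fun i =>
      wextract hconv1 (hα0 (i+2)) (hα0 (i+2))
    have hext2 : ∀ i : ℕ, ∃ b ∈ A, b ≤ α (i+2) ∧ dN (p b) z ≤ α (i+2) := fun i =>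
      wextract hconv2 (hα0 (i+2)) (hα0 (i+2))
    choose b hbA hble hbd using hext1
    choose b' hb'A hb'le hb'd using hext2
    have hxz : ∀ i : ℕ, dN (p (b i)) z ≤ α (i+1) := by
      intro i
      calc dN (p (b i)) z ≤ dN (p (b i)) (p (b' i)) + dN (p (b' i)) z := hdN.2 _ _ _
        _ ≤ (b i + b' i) + α (i+2) :=
            wadd_le (hp.2.2 _ (hbA i) _ (hb'A i)) (hb'd i)
        _ ≤ (α (i+2) + α (i+2)) + α (i+2) := wadd_le (wadd_le (hble i) (hb'le i)) le_rfl
        _ = α (i+2) + (α (i+2) + α (i+2)) := by abel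
        _ ≤ α (i+1) := h3le (i+1)
    have hzx : ∀ i : ℕ, dN z (p (b i)) ≤ α (i+1) := fun i =>
      (hbd i).trans (hαanti (i+1) (i+2) (by omega))
    refine ⟨fun i => p (b i), fun i => hpD _ (hbA i), ?_, ?_⟩
    · intro i j
      calc dN (p (b i)) (p (b j)) ≤ dN (p (b i)) z + dN z (p (b j)) := hdN.2 _ _ _
        _ ≤ α (i+1) + α (j+1) := wadd_le (hxz i) (hzx j)
        _ ≤ α i + α j := wadd_le (hαanti i (i+1) (by omega)) (hαanti j (j+1) (by omega))
    · intro i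
      have hgz : dN z (g (p (b i))) ≤ α (i+1) := by
        calc dN z (g (p (b i))) = dN (g z) (g (p (b i))) := by rw [hz]
          _ ≤ dN z (p (b i)) := hg _ _
          _ ≤ α (i+1) := hzx i
      have hgz' : dN (g (p (b i))) z ≤ α (i+1) := by
        calc dN (g (p (b i))) z = dN (g (p (b i))) (g z) := by rw [hz]
          _ ≤ dN (p (b i)) z := hg _ _
          _ ≤ α (i+1) := hxz i
      constructor
      · calc dN (p (b i)) (g (p (b i)))
            ≤ dN (p (b i)) z + dN z (g (p (b i))) := hdN.2 _ _ _
          _ ≤ α (i+1) + α (i+1) := wadd_le (hxz i) hgz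
          _ ≤ α i := h2le i
      · calc dN (g (p (b i))) (p (b i))
            ≤ dN (g (p (b i))) z + dN z (p (b i)) := hdN.2 _ _ _
          _ ≤ α (i+1) + α (i+1) := wadd_le hgz' (hzx i)
          _ ≤ α i := h2le i
end

section
/- Let κ be an infinite ordinal with cofinality ω. Then every pruned κ-tree has a path. -/
/-!
Fix a sequence `gₙ` cofinal in `κ`. Since `κ` is a limit and the tree is pruned, we can climb
from the root along a chain `a₀ ≤ a₁ ≤ ⋯` with `lev aₙ₊₁ > gₙ`, so the levels of the `aₙ` are
cofinal in `κ`. The path takes at level `γ` a node of level `γ` below some `aₙ`; any two such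
choices lie below a common `aₙ`, hence are comparable, and their levels order them.
-/

/-- `T` (with level function `lev`) is a `κ`-tree: a partial order with a unique minimal
element in which the set of predecessors of any element is a chain mapped
order-isomorphically by `lev` onto an ordinal below `κ` (its order type). -/
structure IsTree {T : Type*} [PartialOrder T] (κ : Ordinal) (lev : T → Ordinal) : Prop where
  root : ∃! r : T, IsMin r
  chainBelow : ∀ a b c : T, b < a → c < a → b < c ∨ b = c ∨ c < b
  lev_lt : ∀ a : T, lev a < κ
  lev_strictMono : ∀ a b : T, a < b → lev a < lev b
  lev_surjOn : ∀ a : T, ∀ i, i < lev a → ∃ b, b < a ∧ lev b = i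

/-- A `κ`-tree is pruned if every element has extensions to all higher levels below `κ`. -/
def IsPruned {T : Type*} [PartialOrder T] (κ : Ordinal) (lev : T → Ordinal) : Prop :=
  ∀ a : T, ∀ β, β < κ → lev a < β → ∃ b : T, a ≤ b ∧ lev b = β

/-- A path through a `κ`-tree: a strictly increasing selection of one node of each
level `γ < κ`. -/
def IsPath {T : Type*} [PartialOrder T] (κ : Ordinal) (lev : T → Ordinal)
    (p : {γ : Ordinal // γ < κ} → T) : Prop :=
  (∀ γ, lev (p γ) = γ.1) ∧ ∀ γ δ : {γ : Ordinal // γ < κ}, γ < δ → p γ < p δ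

open Order Cardinal Ordinal

theorem Ordinal.exists_seq_cofinal_of_cof_eq_aleph0 {o : Ordinal} (h : o.cof = ℵ₀) :
    ∃ g : ℕ → Ordinal, (∀ n, g n < o) ∧ ∀ β < o, ∃ n, β ≤ g n := by
  obtain ⟨f, hf⟩ := exists_isFundamentalSeq (a := ω) (by rw [h, ord_aleph0])
  refine ⟨fun n => f ⟨n, natCast_lt_omega0 n⟩, fun n => (f _).2, fun β hβ => ?_⟩
  obtain ⟨_, ⟨⟨i, hi⟩, rfl⟩, hβi⟩ := hf.isCofinal_range ⟨β, hβ⟩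
  obtain ⟨n, rfl⟩ := lt_omega0.1 hi
  exact ⟨n, hβi⟩

section

variable {T : Type*} [PartialOrder T] {κ : Ordinal} {lev : T → Ordinal}

theorem IsTree.lt_of_lt_of_lt_of_lev_lt (ht : IsTree κ lev) {x y z : T} (hx : x < z)
    (hy : y < z) (hlev : lev x < lev y) : x < y := by
  rcases ht.chainBelow z x y hx hy with hxy | rfl | hyx
  · exact hxy
  · exact absurd hlev (lt_irrefl _)
  · exact absurd hlev (ht.lev_strictMono y x hyx).not_gt

theorem IsTree.exists_path_of_directed {ι : Type*} (ht : IsTree κ lev) (a : ι → T)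
    (hdir : Directed (· ≤ ·) a) (hcof : ∀ β < κ, ∃ i, β < lev (a i)) : ∃ p, IsPath κ lev p := by
  have hnode (γ : {γ : Ordinal // γ < κ}) : ∃ b, (∃ i, b < a i) ∧ lev b = γ := by
    obtain ⟨i, hi⟩ := hcof γ γ.2
    obtain ⟨b, hb, hbγ⟩ := ht.lev_surjOn (a i) γ hi
    exact ⟨b, ⟨i, hb⟩, hbγ⟩
  choose p hp hlev using hnode
  refine ⟨p, hlev, fun γ δ hγδ => ?_⟩
  obtain ⟨i, hi⟩ := hp γ
  obtain ⟨j, hj⟩ := hp δ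
  obtain ⟨k, hik, hjk⟩ := hdir i j
  exact ht.lt_of_lt_of_lt_of_lev_lt (hi.trans_le hik) (hj.trans_le hjk)
    (by rw [hlev, hlev]; exact hγδ)

theorem IsPruned.exists_le_lt_lev (hpr : IsPruned κ lev) (hκ : IsSuccLimit κ) {x : T}
    (hx : lev x < κ) {β : Ordinal} (hβ : β < κ) : ∃ y, x ≤ y ∧ β < lev y := by
  obtain ⟨y, hxy, hy⟩ :=
    hpr x _ (hκ.succ_lt (max_lt hx hβ)) ((le_max_left _ _).trans_lt (lt_succ _))
  exact ⟨y, hxy, hy ▸ (le_max_right _ _).trans_lt (lt_succ _)⟩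

theorem IsPruned.exists_monotone_seq_lev_cofinal [Nonempty T] (hpr : IsPruned κ lev)
    (hκ : κ.cof = ℵ₀) (hlev : ∀ x, lev x < κ) :
    ∃ a : ℕ → T, Monotone a ∧ ∀ β < κ, ∃ n, β < lev (a n) := by
  obtain ⟨g, hgκ, hg⟩ := Ordinal.exists_seq_cofinal_of_cof_eq_aleph0 hκ
  have hlim : IsSuccLimit κ := Ordinal.one_lt_cof_iff.1 (hκ ▸ one_lt_aleph0)
  choose next hle hlt using fun (n : ℕ) (x : T) => hpr.exists_le_lt_lev hlim (hlev x) (hgκ n)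
  obtain ⟨r⟩ := ‹Nonempty T›
  let a : ℕ → T := fun n => Nat.rec r next n
  refine ⟨a, monotone_nat_of_le_succ fun n => hle n (a n), fun β hβ => ?_⟩
  obtain ⟨n, hn⟩ := hg β hβ
  exact ⟨n + 1, hn.trans_lt (hlt n (a n))⟩

end

theorem stmt14_general {T : Type*} [PartialOrder T] (κ : Ordinal) (lev : T → Ordinal)
    (hcof : κ.cof = Cardinal.aleph0)
    (ht : IsTree κ lev) (hpr : IsPruned κ lev) :
    ∃ p, IsPath κ lev p := by
  have : Nonempty T := ht.root.exists.nonempty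
  obtain ⟨a, ha, hlev⟩ := hpr.exists_monotone_seq_lev_cofinal hcof ht.lev_lt
  exact ht.exists_path_of_directed a ha.directed_le hlev

/-- Every pruned `κ`-tree, for `κ` an infinite ordinal of cofinality `ω`, has a path. -/
theorem stmt14 {T : Type*} [PartialOrder T] (κ : Ordinal) (lev : T → Ordinal)
    (hκ : Ordinal.omega0 ≤ κ) (hcof : κ.cof = Cardinal.aleph0)
    (ht : IsTree κ lev) (hpr : IsPruned κ lev) :
    ∃ p, IsPath κ lev p :=
  stmt14_general κ lev hcof ht hpr
end

section
/- Let W be a continuous distance monoid, κ an infinite ordinal, T a pruned κ-tree, and α : κ → W⁺ an initial sequence with 2·α(i+1) ≤ α(i) for all i < κ. If f : T → T is a map such that f(t) > t for all t ∈ T, then f is a non-expanding map of (T, d_{T,α}) to itself, i.e., d_{T,α}(f(a), f(b)) ≤ d_{T,α}(a, b) for all a, b ∈ T. -/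
/-- `join(a, b)` for tree nodes: the supremum of the levels of common lower bounds. -/
noncomputable def joinT {T : Type*} [PartialOrder T] (lev : T → Ordinal) (a b : T) : Ordinal :=
  sSup (lev '' {c : T | c ≤ a ∧ c ≤ b})

open Classical in
/-- The distance `d_{T,α}` on `T`: `α (join a b)` for `a ≠ b`, and `0` on the diagonal. -/
noncomputable def dTT {W T : Type*} [CompleteDistMonoid W] [PartialOrder T]
    (lev : T → Ordinal) (α : Ordinal → W) (a b : T) : W :=
  if a = b then 0 else α (joinT lev a b)

/-- If `f : T → T` satisfies `f t > t` on a pruned `κ`-tree, then `f` is non-expanding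
with respect to `d_{T,α}`. -/
theorem stmt16 {W T : Type*} [CompleteDistMonoid W] [PartialOrder T]
    (hW : ContinuousAtZero W)
    (κ : Ordinal) (hκ : Ordinal.omega0 ≤ κ)
    (lev : T → Ordinal) (ht : IsTree κ lev) (hpr : IsPruned κ lev)
    (α : Ordinal → W) (hα : IsInitialSeq κ α)
    (hα2 : ∀ i, i < κ → 2 • α (i + 1) ≤ α i)
    (f : T → T) (hf : ∀ t : T, t < f t) :
    ∀ a b : T, dTT lev α (f a) (f b) ≤ dTT lev α a b := by
  intro a b
  unfold dTT
  by_cases hab : a = b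
  · subst hab; simp
  · rw [if_neg hab]
    by_cases hfab : f a = f b
    · rw [if_pos hfab]
      exact CompleteDistMonoid.bot_eq_zero (W := W) ▸ bot_le
    · rw [if_neg hfab]
      have hub : ∀ x y : T, lev x ∈ upperBounds (lev '' {c : T | c ≤ x ∧ c ≤ y}) := by
        rintro x y _ ⟨c, ⟨hcx, _⟩, rfl⟩
        rcases lt_or_eq_of_le hcx with h | h
        · exact (ht.lev_strictMono _ _ h).le
        · rw [h]
      have hj : joinT lev a b ≤ joinT lev (f a) (f b) := by
        apply csSup_le'
        rintro _ ⟨c, ⟨hca, hcb⟩, rfl⟩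
        exact le_csSup ⟨lev (f a), hub _ _⟩
          ⟨c, ⟨hca.trans (hf a).le, hcb.trans (hf b).le⟩, rfl⟩
      have hlt : joinT lev (f a) (f b) < κ :=
        lt_of_le_of_lt (csSup_le' (hub _ _)) (ht.lev_lt _)
      exact hα.2.1 _ _ hj hlt
end

section
/- Let W be a continuous distance monoid, κ an infinite ordinal, T a pruned κ-tree, and α : κ → W⁺ an initial sequence with 2·α(i+1) ≤ α(i) for all i < κ. Let f : T → T satisfy f(t) > t for all t ∈ T, and let g : T ∪ Paths(T) → T ∪ Paths(T) be any non-expanding map (with respect to d_{T,α}) whose restriction to T equals f. Then g(p) = p for every path p ∈ Paths(T). -/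
/-- The set of paths through the tree. -/
def PathT {T : Type*} [PartialOrder T] (κ : Ordinal) (lev : T → Ordinal) :=
  {p : {γ : Ordinal // γ < κ} → T // IsPath κ lev p}

/-- `c ∈ T` lies below a point of `T ∪ Paths(T)`. -/
def BelowX {T : Type*} [PartialOrder T] (κ : Ordinal) (lev : T → Ordinal)
    (c : T) : T ⊕ PathT κ lev → Prop
  | .inl t => c ≤ t
  | .inr p => ∃ γ, p.1 γ = c

/-- `join(u, v)`: the supremum of the levels of common lower bounds in `T`. -/
noncomputable def joinX {T : Type*} [PartialOrder T] (κ : Ordinal) (lev : T → Ordinal)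
    (u v : T ⊕ PathT κ lev) : Ordinal :=
  sSup (lev '' {c : T | BelowX κ lev c u ∧ BelowX κ lev c v})

open Classical in
/-- The distance `d_{T,α}` on `T ∪ Paths(T)`:  `α (join u v)` for `u ≠ v`, and `0` on the
diagonal. -/
noncomputable def dTree {W T : Type*} [CompleteDistMonoid W] [PartialOrder T]
    (κ : Ordinal) (lev : T → Ordinal) (α : Ordinal → W)
    (u v : T ⊕ PathT κ lev) : W :=
  if u = v then 0 else α (joinX κ lev u v)

/-- If `f : T → T` satisfies `f t > t` on a pruned `κ`-tree and `g` is any non-expanding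
self-map of `(T ∪ Paths(T), d_{T,α})` restricting to `f` on `T`, then `g` fixes every
path. -/
theorem stmt17 {W T : Type*} [CompleteDistMonoid W] [PartialOrder T]
    (hW : ContinuousAtZero W)
    (κ : Ordinal) (hκ : Ordinal.omega0 ≤ κ)
    (lev : T → Ordinal) (ht : IsTree κ lev) (hpr : IsPruned κ lev)
    (α : Ordinal → W) (hα : IsInitialSeq κ α)
    (hα2 : ∀ i, i < κ → 2 • α (i + 1) ≤ α i)
    (f : T → T) (hf : ∀ t : T, t < f t)
    (g : T ⊕ PathT κ lev → T ⊕ PathT κ lev)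
    (hg : ∀ u v : T ⊕ PathT κ lev, dTree κ lev α (g u) (g v) ≤ dTree κ lev α u v)
    (hgf : ∀ t : T, g (Sum.inl t) = Sum.inl (f t)) :
    ∀ p : PathT κ lev, g (Sum.inr p) = Sum.inr p := by
  classical
  intro p
  obtain ⟨hpos, hrev, hcoi⟩ := hα
  have h0le : ∀ w : W, 0 ≤ w := fun w => by
    rw [← CompleteDistMonoid.bot_eq_zero (W := W)]; exact bot_le
  have hsmall : ∀ γ0 : Ordinal, γ0 < κ → ∃ β, β < κ ∧ α β < α γ0 := by
    intro γ0 hγ0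
    have hne : α γ0 ≠ 0 := hpos γ0 hγ0
    have hlt : (0 : W) < α γ0 := lt_of_le_of_ne (h0le _) (Ne.symm hne)
    have hinf : sInf {c : W | ∃ a b : W, a ≠ 0 ∧ b ≠ 0 ∧ c = a + b} < α γ0 := by
      rw [hW]; exact hlt
    rw [sInf_lt_iff] at hinf
    obtain ⟨c, ⟨a, b, ha, hb, rfl⟩, hc⟩ := hinf
    have hab : a ≤ a + b := by
      have := CompleteDistMonoid.add_le_add_left 0 b (h0le b) a
      rwa [add_zero] at this
    obtain ⟨β, hβκ, hβ⟩ := hcoi a ha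
    exact ⟨β, hβκ, lt_of_le_of_lt hβ (lt_of_le_of_lt hab hc)⟩
  have uniqLev : ∀ x b c : T, b < x → c < x → lev b = lev c → b = c := by
    intro x b c hb hc hl
    rcases ht.chainBelow x b c hb hc with h | h | h
    · exact absurd hl (ne_of_lt (ht.lev_strictMono _ _ h))
    · exact h
    · exact absurd hl.symm (ne_of_lt (ht.lev_strictMono _ _ h))
  set P := p.1 with hPdef
  have hdpath : ∀ Γ : {γ : Ordinal // γ < κ},
      dTree κ lev α (Sum.inl (P Γ)) (Sum.inr p) = α Γ.1 := by
    intro Γ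
    have hxy : (Sum.inl (P Γ) : T ⊕ PathT κ lev) ≠ Sum.inr p := Sum.inl_ne_inr
    rw [dTree, if_neg hxy]
    congr 1
    have hub : ∀ o ∈ lev '' {c : T | BelowX κ lev c (Sum.inl (P Γ)) ∧
        BelowX κ lev c (Sum.inr p)}, o ≤ Γ.1 := by
      rintro o ⟨c, ⟨hc1, hc2⟩, rfl⟩
      rcases lt_or_eq_of_le (hc1 : c ≤ P Γ) with h | h
      · exact le_of_lt (p.2.1 Γ ▸ ht.lev_strictMono _ _ h)
      · rw [h, p.2.1 Γ]
    apply le_antisymm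
    · exact csSup_le' hub
    · apply le_csSup ⟨Γ.1, fun o ho => hub o ho⟩
      exact ⟨P Γ, ⟨le_refl _, show ∃ δ, P δ = P Γ from ⟨Γ, rfl⟩⟩, p.2.1 Γ⟩
  rcases hcase : g (Sum.inr p) with t | q
  · exfalso
    obtain ⟨β, hβκ, hβ⟩ := hsmall (lev t) (ht.lev_lt t)
    have hγκ : max β (lev t) < κ := max_lt hβκ (ht.lev_lt t)
    set Γ : {γ : Ordinal // γ < κ} := ⟨max β (lev t), hγκ⟩ with hΓdef
    have hlev : lev (P Γ) = max β (lev t) := p.2.1 Γ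
    have hFlev : lev t < lev (f (P Γ)) :=
      lt_of_le_of_lt (le_max_right β (lev t)) (hlev ▸ ht.lev_strictMono _ _ (hf (P Γ)))
    have hne : f (P Γ) ≠ t := fun h => absurd (congrArg lev h) (ne_of_gt hFlev)
    have hchain := hg (Sum.inl (P Γ)) (Sum.inr p)
    rw [hgf, hcase, hdpath] at hchain
    have hd : dTree κ lev α (Sum.inl (f (P Γ))) (Sum.inl t)
        = α (joinX κ lev (Sum.inl (f (P Γ))) (Sum.inl t)) := by
      rw [dTree, if_neg (fun h => hne (Sum.inl_injective h))]
    have hJ : joinX κ lev (Sum.inl (f (P Γ))) (Sum.inl t) ≤ lev t := by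
      apply csSup_le'
      rintro o ⟨c, ⟨hc1, hc2⟩, rfl⟩
      rcases lt_or_eq_of_le (hc2 : c ≤ t) with h | h
      · exact le_of_lt (ht.lev_strictMono _ _ h)
      · rw [h]
    have h1 : α (lev t) ≤ α (joinX κ lev (Sum.inl (f (P Γ))) (Sum.inl t)) :=
      hrev _ _ hJ (ht.lev_lt t)
    have h2 : α Γ.1 ≤ α β := hrev β Γ.1 (le_max_left _ _) hγκ
    rw [hd] at hchain
    exact absurd (le_trans h1 (le_trans hchain h2)) (not_le.mpr hβ)
  · have hq : q = p := by
      by_contra hqp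
      have hdiff : ∃ Γ0, P Γ0 ≠ q.1 Γ0 := by
        by_contra hcon
        push_neg at hcon
        exact hqp (Subtype.ext (funext fun Γ => (hcon Γ).symm))
      obtain ⟨Γ0, hΓ0⟩ := hdiff
      have lemA : ∀ Δ : {γ : Ordinal // γ < κ}, Γ0.1 ≤ Δ.1 → P Δ ≠ q.1 Δ := by
        intro Δ hle heq
        rcases eq_or_lt_of_le hle with h | h
        · have hΔ : Γ0 = Δ := Subtype.ext h
          cases hΔ
          exact hΓ0 heq
        · have h1 : P Γ0 < P Δ := p.2.2 Γ0 Δ h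
          have h2 : q.1 Γ0 < q.1 Δ := q.2.2 Γ0 Δ h
          rw [heq] at h1
          exact hΓ0 (uniqLev (q.1 Δ) (P Γ0) (q.1 Γ0) h1 h2
            (by rw [p.2.1 Γ0, q.2.1 Γ0]))
      obtain ⟨β, hβκ, hβ⟩ := hsmall Γ0.1 Γ0.2
      have hγκ : max β Γ0.1 < κ := max_lt hβκ Γ0.2
      set Γ : {x : Ordinal // x < κ} := ⟨max β Γ0.1, hγκ⟩ with hΓdef
      have hΓ0Γ : Γ0.1 ≤ Γ.1 := le_max_right _ _
      have hlevΓ : lev (P Γ) = Γ.1 := p.2.1 Γ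
      have hFlev : Γ.1 < lev (f (P Γ)) := hlevΓ ▸ ht.lev_strictMono _ _ (hf (P Γ))
      have hJ : joinX κ lev (Sum.inl (f (P Γ))) (Sum.inr q) ≤ Γ0.1 := by
        apply csSup_le'
        rintro o ⟨c, ⟨hc1, hc2⟩, rfl⟩
        obtain ⟨Δ, hΔ⟩ := (hc2 : ∃ δ, q.1 δ = c)
        have hlevc : lev c = Δ.1 := by rw [← hΔ, q.2.1]
        rw [hlevc]
        by_contra hge
        push_neg at hge
        rcases lt_or_eq_of_le (hc1 : c ≤ f (P Γ)) with hcFlt | hcFeq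
        · rcases ht.chainBelow (f (P Γ)) c (P Γ) hcFlt (hf (P Γ)) with hct | hct | hct
          · have hΔγ : Δ.1 < Γ.1 := by
              have := ht.lev_strictMono _ _ hct
              rwa [hlevc, hlevΓ] at this
            have hPΔ : P Δ < P Γ := p.2.2 Δ Γ hΔγ
            have hcPΔ : c = P Δ := uniqLev (P Γ) c (P Δ) hct hPΔ (by rw [hlevc, p.2.1 Δ])
            exact lemA Δ hge.le (by rw [← hcPΔ, hΔ])
          · have hΔΓ : Δ = Γ := Subtype.ext (by rw [← hlevc, hct, hlevΓ])
            exact lemA Γ hΓ0Γ (by rw [← hct, ← hΔΓ, hΔ])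
          · have hγΔ : Γ.1 < Δ.1 := by
              have := ht.lev_strictMono _ _ hct
              rwa [hlevc, hlevΓ] at this
            have hqΓ : q.1 Γ < q.1 Δ := q.2.2 Γ Δ hγΔ
            rw [hΔ] at hqΓ
            exact lemA Γ hΓ0Γ
              ((uniqLev c (q.1 Γ) (P Γ) hqΓ hct (by rw [q.2.1, hlevΓ])).symm)
        · have hγΔ : Γ.1 < Δ.1 := by rw [← hlevc, hcFeq]; exact hFlev
          have hqΓ : q.1 Γ < q.1 Δ := q.2.2 Γ Δ hγΔ
          rw [hΔ, hcFeq] at hqΓ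
          exact lemA Γ hΓ0Γ
            ((uniqLev (f (P Γ)) (q.1 Γ) (P Γ) hqΓ (hf (P Γ)) (by rw [q.2.1, hlevΓ])).symm)
      have hchain := hg (Sum.inl (P Γ)) (Sum.inr p)
      rw [hgf, hcase, hdpath] at hchain
      have hd : dTree κ lev α (Sum.inl (f (P Γ))) (Sum.inr q)
          = α (joinX κ lev (Sum.inl (f (P Γ))) (Sum.inr q)) := by
        rw [dTree, if_neg (Sum.inl_ne_inr)]
      have h1 : α Γ0.1 ≤ α (joinX κ lev (Sum.inl (f (P Γ))) (Sum.inr q)) :=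
        hrev _ _ hJ Γ0.2
      have h2 : α Γ.1 ≤ α β := hrev β Γ.1 (le_max_left _ _) hγκ
      rw [hd] at hchain
      exact absurd (le_trans h1 (le_trans hchain h2)) (not_le.mpr hβ)
    rw [hq]
end
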